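/- arXiv:1810.13395 — 6 statements merged into one kernel-verified Lean document; each statement's English description precedes it below -/
import Mathlib

section
/- There exist constants C > 0 and κ₀ ≥ 1 such that for every κ ≥ κ₀, every u ∈ (0,1], and every η ∈ (0, η₀(u)], the 4×4 matrix B(u, η/κ) has a complex eigenvalue λ with |λ| ≥ 1 − C/κ. (Thus when the step size satisfies the non-divergence condition η ≤ η₀(u), the second-moment evolution operator of SGD+Nesterov in the low-curvature coordinate has spectral radius at least 1 − O(1/κ).) -/
/-!
`B(u, t)` has the eigenvalue `γ (1 - t)`, and its characteristic polynomial factors as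
`(r - γ (1 - t)) q(r)` with `q` a monic cubic. The condition `η ≤ η₀(u)` forces `η ≤ u`, so
`t = η / κ ≤ u / κ`. If `u ≲ 1/κ`, the eigenvalue `γ (1 - t) ≥ 1 - u - t` is already `1 - O(1/κ)`.
Otherwise `q(1 - s) ≤ 0` for `s = 100/κ`: at `t = 0` we have `q(r) = (r - 1)(r - γ)(r - γ²)`, so
`q(1 - s) ≈ -s (u - s)(2u - u² - s) ≤ -s u² / 4`, and the `O(t) = O(u s / 100)` correction cannot
change the sign. Since `q` is monic, it has a real root in `[1 - s, ∞)`.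
-/

open Polynomial

/-- The 4×4 matrix governing the evolution of the second moments of one coordinate of the
error of SGD+Nesterov with per-coordinate step size `t` and momentum `γ = 1 - u` on the
component decoupled data model. -/
noncomputable def nesterovMomentMatrix (u t : ℝ) : Matrix (Fin 4) (Fin 4) ℝ :=
  let γ : ℝ := 1 - u
  let A : ℝ := (1 - t) ^ 2 + 5 * t ^ 2
  !![(1 + γ) ^ 2 * A, -(γ * (1 + γ) * A), -(γ * (1 + γ) * A), γ ^ 2 * A;
     (1 + γ) * (1 - t), 0, -(γ * (1 - t)), 0;
     (1 + γ) * (1 - t), -(γ * (1 - t)), 0, 0;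
     1, 0, 0, 0]

/-- The critical step size `η₀(u)`. -/
noncomputable def eta0 (u : ℝ) : ℝ :=
  (-3 - 2 * u + 2 * u ^ 2 +
      Real.sqrt (9 + 84 * u - 164 * u ^ 2 + 100 * u ^ 3 - 20 * u ^ 4)) /
    (2 * (9 - 15 * u + 6 * u ^ 2))

theorem Polynomial.exists_isRoot_ge_of_eval_nonpos {p : ℝ[X]} (hdeg : 0 < p.degree)
    (hlead : 0 ≤ p.leadingCoeff) {a : ℝ} (ha : p.eval a ≤ 0) : ∃ x, a ≤ x ∧ p.IsRoot x :=
  intermediate_value_Ici p.continuous.continuousOn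
    (p.tendsto_atTop_of_leadingCoeff_nonneg hdeg hlead) ha

theorem eta0_le {u : ℝ} (hu0 : 0 < u) (hu1 : u ≤ 1) : eta0 u ≤ u := by
  have h1u : 0 ≤ 1 - u := by linarith
  -- `div_le_of_le_mul₀` also covers `u = 1`, where the denominator vanishes
  refine div_le_of_le_mul₀ (by nlinarith) hu0.le ?_
  suffices Real.sqrt (9 + 84 * u - 164 * u ^ 2 + 100 * u ^ 3 - 20 * u ^ 4) ≤
      3 + 20 * u - 32 * u ^ 2 + 12 * u ^ 3 by linarith
  rw [Real.sqrt_le_iff]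
  constructor
  · nlinarith [mul_nonneg hu0.le h1u]
  · nlinarith [sq_nonneg (1 - u), sq_nonneg u, mul_nonneg hu0.le h1u,
        mul_nonneg (mul_nonneg hu0.le hu0.le) h1u,
        mul_nonneg (mul_nonneg (mul_nonneg hu0.le hu0.le) hu0.le) h1u]

noncomputable def nesterovCubic (u t r : ℝ) : ℝ :=
  r^3 - ((1 + (1-u) + (1-u)^2) - (2 + 3*(1-u) + 2*(1-u)^2)*t + 6*(1 + 2*(1-u) + (1-u)^2)*t^2)*r^2
    + (((1-u) + (1-u)^3)*(1 - 3*t + 8*t^2 - 6*t^3) + (1-u)^2*(1 - 4*t + 10*t^2 - 12*t^3))*r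
    - (1-u)^3*(1 - 3*t + 8*t^2 - 6*t^3)

theorem nesterovMomentMatrix_charpoly_eval (u t r : ℝ) :
    (nesterovMomentMatrix u t).charpoly.eval r = (r - (1 - u) * (1 - t)) * nesterovCubic u t r := by
  rw [Matrix.eval_charpoly, Matrix.det_succ_row_zero]
  simp [Fin.sum_univ_succ, Matrix.det_fin_three, Fin.succAbove, nesterovMomentMatrix, nesterovCubic]
  ring

theorem nesterovCubic_one_sub_nonpos {u s t : ℝ} (hs : 0 < s) (hs4 : s ≤ 1 / 4) (hsu : 2 * s ≤ u)
    (hu1 : u ≤ 1) (ht0 : 0 ≤ t) (ht : 100 * t ≤ u * s) : nesterovCubic u t (1 - s) ≤ 0 := by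
  have hu0 : 0 < u := by linarith
  have hus : 0 ≤ u * s := by positivity
  obtain ⟨G, hG_def⟩ : ∃ G : ℝ,
      G = 4*s - 7*s^2 - 4*u + 6*u*s + 7*u*s^2 + 2*u^2 - 9*u^2*s - 2*u^2*s^2 + 3*u^3*s := ⟨_, rfl⟩
  obtain ⟨H, hH_def⟩ : ∃ H : ℝ,
      H = 6 - 22*s + 24*s^2 + 4*u - 4*u*s - 24*u*s^2 - 4*u^2 + 22*u^2*s + 6*u^2*s^2 - 8*u^3*s :=
    ⟨_, rfl⟩
  obtain ⟨K, hK_def⟩ : ∃ K : ℝ, K = 18 - 24*s - 30*u + 48*u*s + 12*u^2 - 30*u^2*s + 6*u^3*s :=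
    ⟨_, rfl⟩
  have expand : nesterovCubic u t (1 - s) =
      -(s * (u - s) * (2 * u - u ^ 2 - s) + t * (G + t * H + t ^ 2 * K)) := by
    rw [hG_def, hH_def, hK_def, nesterovCubic]; ring
  have hG : -(6 * u) ≤ G := by
    rw [hG_def]
    nlinarith [mul_nonneg hs.le (by linarith : (0:ℝ) ≤ 4 - 7*s),
      mul_nonneg hus (by nlinarith : (0:ℝ) ≤ 7*s),
      mul_nonneg (mul_nonneg hu0.le hu0.le)
        (by nlinarith [mul_nonneg (by linarith : (0:ℝ) ≤ 1-4*s) (by linarith : (0:ℝ) ≤ 2-s),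
          mul_nonneg (by linarith : (0:ℝ) ≤ u-2*s) hs.le] : (0:ℝ) ≤ 2 - 9*s + 3*u*s),
      mul_nonneg hus hus]
  have hH : -76 ≤ H := by
    rw [hH_def]
    nlinarith [mul_nonneg hus hs.le, mul_nonneg hus hu0.le,
      mul_nonneg (mul_nonneg hus hu0.le) hu0.le]
  have hK : -44 ≤ K := by
    rw [hK_def]
    nlinarith [mul_nonneg hus hu0.le, mul_nonneg (mul_nonneg hus hu0.le) hu0.le]
  clear hG_def hH_def hK_def
  have ht400 : 400 * t ≤ u := by nlinarith
  have hR : -(7 * u) ≤ G + t * H + t ^ 2 * K := by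
    nlinarith [mul_le_mul_of_nonneg_left hH ht0, mul_le_mul_of_nonneg_left hK (sq_nonneg t)]
  have hmain : s * u ^ 2 / 4 ≤ s * (u - s) * (2 * u - u ^ 2 - s) := by
    have h : u / 2 * (u / 2) ≤ (u - s) * (2 * u - u ^ 2 - s) :=
      mul_le_mul (by linarith) (by nlinarith) (by linarith) (by linarith)
    nlinarith [mul_le_mul_of_nonneg_left h hs.le]
  rw [expand, neg_nonpos]
  nlinarith [mul_le_mul_of_nonneg_left hR ht0, mul_le_mul_of_nonneg_left ht hu0.le]

theorem nesterovMomentMatrix_exists_root_ge {κ u t : ℝ} (hκ : 400 ≤ κ) (hu0 : 0 < u)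
    (hu1 : u ≤ 1) (ht0 : 0 ≤ t) (htu : t ≤ u / κ) :
    ∃ x : ℝ, (nesterovMomentMatrix u t).charpoly.IsRoot x ∧ 1 - 400 / κ ≤ x := by
  have hκ0 : 0 < κ := by linarith
  have hκu : u / κ ≤ u := div_le_self hu0.le (by linarith)
  by_cases hsu : 2 * (100 / κ) ≤ u
  · have hs4 : 100 / κ ≤ 1 / 4 := by rw [div_le_iff₀ hκ0]; linarith
    have ht : 100 * t ≤ u * (100 / κ) := by
      calc 100 * t ≤ 100 * (u / κ) := by linarith
        _ = u * (100 / κ) := by ring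
    have hmonic := Matrix.charpoly_monic (nesterovMomentMatrix u t)
    have hdeg : 0 < (nesterovMomentMatrix u t).charpoly.degree := by
      rw [Matrix.charpoly_degree_eq_dim]; simp
    have heval : (nesterovMomentMatrix u t).charpoly.eval (1 - 100 / κ) ≤ 0 := by
      rw [nesterovMomentMatrix_charpoly_eval]
      refine mul_nonpos_of_nonneg_of_nonpos ?_
        (nesterovCubic_one_sub_nonpos (by positivity) hs4 hsu hu1 ht0 ht)
      nlinarith [mul_nonneg ht0 (by linarith : (0 : ℝ) ≤ 1 - u)]
    obtain ⟨x, hx, hroot⟩ :=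
      exists_isRoot_ge_of_eval_nonpos hdeg (by rw [hmonic.leadingCoeff]; norm_num) heval
    have : 100 / κ ≤ 400 / κ := div_le_div_of_nonneg_right (by norm_num) hκ0.le
    exact ⟨x, hroot, by linarith⟩
  · refine ⟨(1 - u) * (1 - t), by simp [IsRoot, nesterovMomentMatrix_charpoly_eval], ?_⟩
    have : 400 / κ = 2 * (2 * (100 / κ)) := by ring
    nlinarith [mul_nonneg hu0.le ht0]

/-- There exist `C > 0` and `κ₀ ≥ 1` such that for every `κ ≥ κ₀`, every `u ∈ (0,1]` and
every `η ∈ (0, η₀(u)]`, the matrix `B(u, η/κ)` has a complex eigenvalue `λ` (a root of its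
characteristic polynomial over `ℂ`) with `|λ| ≥ 1 - C/κ`. -/
theorem nesterovMomentMatrix_spectral_radius_lower_bound :
    ∃ C > (0 : ℝ), ∃ κ₀ ≥ (1 : ℝ), ∀ κ ≥ κ₀, ∀ u ∈ Set.Ioc (0 : ℝ) 1,
      ∀ η ∈ Set.Ioc (0 : ℝ) (eta0 u),
      ∃ lam : ℂ,
        ((nesterovMomentMatrix u (η / κ)).charpoly.map (algebraMap ℝ ℂ)).IsRoot lam ∧
        1 - C / κ ≤ ‖lam‖ := by
  refine ⟨400, by norm_num, 400, by norm_num, fun κ hκ u ⟨hu0, hu1⟩ η ⟨hη0, hη⟩ => ?_⟩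
  have hκ0 : 0 < κ := by linarith
  obtain ⟨x, hroot, hx⟩ := nesterovMomentMatrix_exists_root_ge hκ hu0 hu1
    (div_nonneg hη0.le hκ0.le) (div_le_div_of_nonneg_right (hη.trans (eta0_le hu0 hu1)) hκ0.le)
  refine ⟨x, by simpa using hroot.map (f := algebraMap ℝ ℂ), ?_⟩
  rw [Complex.norm_real]
  exact hx.trans (Real.le_norm_self x)
end

section
/- Let H be a d×d symmetric positive definite matrix with smallest eigenvalue μ > 0, let H̃ be a random d×d symmetric positive semidefinite matrix with E[H̃] = H, E[H̃ H⁻¹ H̃] ⪯ κ̃ H and E[H̃²] ⪯ L H, and let w* ∈ ℝ^d. Let η, α, δ > 0 with α ≤ 1, let v, w ∈ ℝ^d be arbitrary, set u = (αv + w)/(1+α), and define the random vectors w⁺ = u − η H̃ (u − w*) and v⁺ = (1−α)v + αu − δ H̃ (u − w*). Then E[‖v⁺ − w*‖²_{H⁻¹} + (δ/α)‖w⁺ − w*‖²] ≤ (1−α)(‖v − w*‖²_{H⁻¹} + (δ/α)‖w − w*‖²) + (α/μ − δ)‖u − w*‖² + (δ²κ̃ + δη²L/α − 2ηδ/α)‖u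 − w*‖²_H. -/
open MeasureTheory ProbabilityTheory Matrix

/-!
Write `e = u - w*` and `x = v - w*`. Then `v⁺ - w* = ((1 - α)x + αe) - δH̃e` and
`w⁺ - w* = e - ηH̃e`, so the Lyapunov function after the step is a quadratic polynomial in `H̃`
whose expectation only involves `E[H̃] = H`, `E[H̃H⁻¹H̃] ⪯ κ̃H` and `E[H̃²] ⪯ LH`. The deterministic
rest is handled by convexity of `‖·‖²_{H⁻¹}`, by `H⁻¹ ⪯ μ⁻¹`, and by `w - w* = (1 + α)e - αx`,
which turns the cross term `-2δ⟨(1 - α)x + αe, e⟩` into `(1 - α)(δ/α)‖w - w*‖² - δ‖e‖²` up to a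
nonpositive remainder.
-/

noncomputable def qf {d : ℕ} (M : Matrix (Fin d) (Fin d) ℝ) (z : Fin d → ℝ) : ℝ :=
  z ⬝ᵥ M.mulVec z

noncomputable def Emat {Ω : Type} [MeasurableSpace Ω] (P : Measure Ω) {d : ℕ}
    (M : Ω → Matrix (Fin d) (Fin d) ℝ) : Matrix (Fin d) (Fin d) ℝ :=
  Matrix.of fun i j => ∫ ω, M ω i j ∂P

section Vectors

variable {n : Type*} [Fintype n]

theorem dotProduct_self_nonneg (z : n → ℝ) : 0 ≤ z ⬝ᵥ z :=
  Finset.sum_nonneg fun i _ => mul_self_nonneg (z i)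

theorem Matrix.IsSymm.dotProduct_mulVec_comm {R : Type*} [CommSemiring R] {A : Matrix n n R}
    (hA : A.IsSymm) (a b : n → R) : a ⬝ᵥ A *ᵥ b = b ⬝ᵥ A *ᵥ a := by
  rw [dotProduct_mulVec, ← mulVec_transpose, hA, dotProduct_comm]

theorem Matrix.IsSymm.inv_mulVec_dotProduct_mulVec [DecidableEq n] {H : Matrix n n ℝ}
    (hH : IsUnit H.det) (hHs : H.IsSymm) (a b : n → ℝ) : H⁻¹ *ᵥ a ⬝ᵥ H *ᵥ b = a ⬝ᵥ b := by
  rw [dotProduct_comm, hHs.inv.dotProduct_mulVec_comm, mulVec_mulVec, nonsing_inv_mul _ hH,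
    one_mulVec]

theorem dotProduct_mulVec_eq_sum (A : Matrix n n ℝ) (a b : n → ℝ) :
    a ⬝ᵥ A *ᵥ b = ∑ i, ∑ j, a i * A i j * b j := by
  simp only [dotProduct, mulVec, Finset.mul_sum, mul_assoc]

theorem Matrix.posSemidef_sub_smul_one_of_mem_lowerBounds [DecidableEq n] {H : Matrix n n ℝ}
    (hH : H.IsHermitian) {μ : ℝ}
    (hμ : μ ∈ lowerBounds {c : ℝ | ∃ v : n → ℝ, v ≠ 0 ∧ H *ᵥ v = c • v}) :
    (H - μ • 1).PosSemidef := by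
  have hA : (H - μ • 1).IsHermitian := hH.sub (isHermitian_one.smul (IsSelfAdjoint.all μ))
  refine hA.posSemidef_iff_eigenvalues_nonneg.mpr fun i => ?_
  have hb := hA.mulVec_eigenvectorBasis i
  rw [sub_mulVec, smul_mulVec, one_mulVec, sub_eq_iff_eq_add, ← add_smul] at hb
  have := hμ ⟨_, fun h => hA.eigenvectorBasis.orthonormal.ne_zero i (by simpa using h), hb⟩
  simpa using this

theorem dotProduct_momentum_le (x e : n → ℝ) {α δ : ℝ} (hα₀ : 0 < α) (hα₁ : α ≤ 1)
    (hδ : 0 ≤ δ) :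
    δ / α * (e ⬝ᵥ e) - 2 * δ * (((1 - α) • x + α • e) ⬝ᵥ e)
      ≤ (1 - α) * (δ / α * (((1 + α) • e - α • x) ⬝ᵥ ((1 + α) • e - α • x))) - δ * (e ⬝ᵥ e) := by
  have hgap : (1 - α) * (δ / α * (((1 + α) • e - α • x) ⬝ᵥ ((1 + α) • e - α • x)))
      - δ * (e ⬝ᵥ e) - (δ / α * (e ⬝ᵥ e) - 2 * δ * (((1 - α) • x + α • e) ⬝ᵥ e))
      = δ * α * (1 - α) * ((x - e) ⬝ᵥ (x - e)) := by
    simp only [dotProduct_sub, sub_dotProduct, add_dotProduct, dotProduct_smul, smul_dotProduct,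
      smul_eq_mul, dotProduct_comm e x]
    field_simp
    ring
  linarith [mul_nonneg (mul_nonneg (mul_nonneg hδ hα₀.le) (sub_nonneg.mpr hα₁))
    (dotProduct_self_nonneg (x - e))]

end Vectors

section QuadraticForm

variable {d : ℕ}

theorem qf_one (z : Fin d → ℝ) : qf 1 z = z ⬝ᵥ z := by
  rw [qf, one_mulVec]

theorem qf_smul (c : ℝ) (A : Matrix (Fin d) (Fin d) ℝ) (z : Fin d → ℝ) :
    qf (c • A) z = c * qf A z := by
  rw [qf, smul_mulVec, dotProduct_smul, smul_eq_mul, qf]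

theorem qf_nonneg {A : Matrix (Fin d) (Fin d) ℝ} (hA : A.PosSemidef) (z : Fin d → ℝ) :
    0 ≤ qf A z := by
  simpa [qf] using hA.dotProduct_mulVec_nonneg z

theorem qf_le_qf_of_posSemidef_sub {A B : Matrix (Fin d) (Fin d) ℝ} (h : (A - B).PosSemidef)
    (z : Fin d → ℝ) : qf B z ≤ qf A z := by
  have := h.dotProduct_mulVec_nonneg z
  rwa [star_trivial, sub_mulVec, dotProduct_sub, sub_nonneg] at this

theorem qf_sub_smul_mulVec {G M : Matrix (Fin d) (Fin d) ℝ} (hG : G.IsSymm) (hM : M.IsSymm)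
    (p e : Fin d → ℝ) (c : ℝ) :
    qf G (p - c • M *ᵥ e) = qf G p - 2 * c * (G *ᵥ p ⬝ᵥ M *ᵥ e) + c ^ 2 * qf (M * G * M) e := by
  have hpMe : p ⬝ᵥ G *ᵥ (M *ᵥ e) = G *ᵥ p ⬝ᵥ M *ᵥ e := by
    rw [hG.dotProduct_mulVec_comm, dotProduct_comm]
  have hMep : M *ᵥ e ⬝ᵥ G *ᵥ p = G *ᵥ p ⬝ᵥ M *ᵥ e := dotProduct_comm _ _
  have hquad : qf (M * G * M) e = M *ᵥ e ⬝ᵥ G *ᵥ (M *ᵥ e) := by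
    rw [qf, ← mulVec_mulVec, ← mulVec_mulVec, hM.dotProduct_mulVec_comm, dotProduct_comm]
  rw [hquad]
  simp only [qf, mulVec_sub, mulVec_smul, dotProduct_sub, sub_dotProduct, dotProduct_smul,
    smul_dotProduct, smul_eq_mul, hpMe, hMep]
  ring

theorem qf_convex_combination_le {G : Matrix (Fin d) (Fin d) ℝ} (hG : G.PosSemidef)
    (x e : Fin d → ℝ) {α : ℝ} (hα₀ : 0 ≤ α) (hα₁ : α ≤ 1) :
    qf G ((1 - α) • x + α • e) ≤ (1 - α) * qf G x + α * qf G e := by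
  have hcross : e ⬝ᵥ G *ᵥ x = x ⬝ᵥ G *ᵥ e :=
    (isHermitian_iff_isSymm.mp hG.isHermitian).dotProduct_mulVec_comm e x
  have hgap : (1 - α) * qf G x + α * qf G e - qf G ((1 - α) • x + α • e)
      = α * (1 - α) * qf G (x - e) := by
    simp only [qf, mulVec_add, mulVec_smul, mulVec_sub, dotProduct_add, add_dotProduct,
      dotProduct_sub, sub_dotProduct, dotProduct_smul, smul_dotProduct, smul_eq_mul, hcross]
    ring
  linarith [mul_nonneg (mul_nonneg hα₀ (sub_nonneg.mpr hα₁)) (qf_nonneg hG (x - e))]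

/-- With `y = H⁻¹ z` and `A = H - μ`, `z ⬝ᵥ z - μ qf H⁻¹ z = ‖A y‖² + μ yᵀ A y`. -/
theorem mul_qf_inv_le_dotProduct_self {H : Matrix (Fin d) (Fin d) ℝ} (hH : IsUnit H.det)
    {μ : ℝ} (hμ : 0 ≤ μ) (hHμ : (H - μ • 1).PosSemidef) (z : Fin d → ℝ) :
    μ * qf H⁻¹ z ≤ z ⬝ᵥ z := by
  set y := H⁻¹ *ᵥ z
  have hz : z = (H - μ • 1) *ᵥ y + μ • y := by
    rw [sub_mulVec, smul_mulVec, one_mulVec, sub_add_cancel, mulVec_mulVec,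
      mul_nonsing_inv _ hH, one_mulVec]
  have hcross : y ⬝ᵥ (H - μ • 1) *ᵥ y = (H - μ • 1) *ᵥ y ⬝ᵥ y := dotProduct_comm _ _
  have hAy := dotProduct_self_nonneg ((H - μ • 1) *ᵥ y)
  have hyAy := qf_nonneg hHμ y
  rw [qf, hcross] at hyAy
  rw [show qf H⁻¹ z = z ⬝ᵥ y from rfl, hz]
  simp only [add_dotProduct, dotProduct_add, smul_dotProduct, dotProduct_smul, smul_eq_mul,
    hcross]
  linarith [mul_nonneg hμ hyAy]

end QuadraticForm

section Expectation

variable {Ω : Type} [MeasurableSpace Ω] {P : Measure Ω} {d : ℕ}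

theorem integrable_dotProduct_mulVec {F : Ω → Matrix (Fin d) (Fin d) ℝ}
    (hF : ∀ i j, Integrable (fun ω => F ω i j) P) (a b : Fin d → ℝ) :
    Integrable (fun ω => a ⬝ᵥ F ω *ᵥ b) P := by
  simp only [dotProduct_mulVec_eq_sum]
  exact integrable_finsetSum _ fun i _ => integrable_finsetSum _ fun j _ =>
    ((hF i j).const_mul (a i)).mul_const (b j)

theorem integral_dotProduct_mulVec {F : Ω → Matrix (Fin d) (Fin d) ℝ}
    (hF : ∀ i j, Integrable (fun ω => F ω i j) P) (a b : Fin d → ℝ) :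
    ∫ ω, a ⬝ᵥ F ω *ᵥ b ∂P = a ⬝ᵥ Emat P F *ᵥ b := by
  simp only [dotProduct_mulVec_eq_sum]
  rw [integral_finsetSum _ fun i _ => integrable_finsetSum _ fun j _ =>
    ((hF i j).const_mul (a i)).mul_const (b j)]
  refine Finset.sum_congr rfl fun i _ => ?_
  rw [integral_finsetSum _ fun j _ => ((hF i j).const_mul (a i)).mul_const (b j)]
  simp only [integral_mul_const, integral_const_mul, Emat, of_apply]

theorem integrable_mul_mul_apply {M : Ω → Matrix (Fin d) (Fin d) ℝ}
    (hM : ∀ i j, MemLp (fun ω => M ω i j) 2 P) (G : Matrix (Fin d) (Fin d) ℝ) (i j : Fin d) :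
    Integrable (fun ω => (M ω * G * M ω) i j) P := by
  simp only [mul_apply, Finset.sum_mul]
  exact integrable_finsetSum _ fun l _ => integrable_finsetSum _ fun k _ =>
    (((hM i k).integrable_mul (hM l j)).mul_const (G k l)).congr
      (ae_of_all _ fun ω => by simp only [Pi.mul_apply]; ring)

variable [IsProbabilityMeasure P]

theorem integrable_and_integral_qf_sub_smul_mulVec {M : Ω → Matrix (Fin d) (Fin d) ℝ}
    {G : Matrix (Fin d) (Fin d) ℝ} (hG : G.IsSymm) (hM : ∀ ω, (M ω).IsSymm)
    (hM₁ : ∀ i j, Integrable (fun ω => M ω i j) P)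
    (hMGM : ∀ i j, Integrable (fun ω => (M ω * G * M ω) i j) P) (p e : Fin d → ℝ) (c : ℝ) :
    Integrable (fun ω => qf G (p - c • M ω *ᵥ e)) P ∧
      ∫ ω, qf G (p - c • M ω *ᵥ e) ∂P = qf G p - 2 * c * (G *ᵥ p ⬝ᵥ Emat P M *ᵥ e)
        + c ^ 2 * qf (Emat P fun ω => M ω * G * M ω) e := by
  simp only [qf_sub_smul_mulVec hG (hM _)]
  have hcross := (integrable_dotProduct_mulVec hM₁ (G *ᵥ p) e).const_mul (2 * c)
  have hlin : Integrable (fun ω => qf G p - 2 * c * (G *ᵥ p ⬝ᵥ M ω *ᵥ e)) P :=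
    (integrable_const _).sub hcross
  have hquad : Integrable (fun ω => c ^ 2 * qf (M ω * G * M ω) e) P :=
    (integrable_dotProduct_mulVec hMGM e e).const_mul (c ^ 2)
  refine ⟨hlin.add hquad, ?_⟩
  rw [integral_add hlin hquad, integral_sub (integrable_const _) hcross, integral_const,
    integral_const_mul, integral_const_mul, integral_dotProduct_mulVec hM₁]
  simp only [qf, integral_dotProduct_mulVec hMGM, probReal_univ, one_smul]

theorem integral_lyapunov_mass_step {M : Ω → Matrix (Fin d) (Fin d) ℝ}
    {H : Matrix (Fin d) (Fin d) ℝ} (hH : IsUnit H.det) (hHs : H.IsSymm) (hM : ∀ ω, (M ω).IsSymm)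
    (hM₂ : ∀ i j, MemLp (fun ω => M ω i j) 2 P) (hmean : Emat P M = H)
    (p e : Fin d → ℝ) (α δ η : ℝ) :
    ∫ ω, (qf H⁻¹ (p - δ • M ω *ᵥ e)
        + δ / α * ((e - η • M ω *ᵥ e) ⬝ᵥ (e - η • M ω *ᵥ e))) ∂P
      = qf H⁻¹ p - 2 * δ * (p ⬝ᵥ e) + δ ^ 2 * qf (Emat P fun ω => M ω * H⁻¹ * M ω) e
        + δ / α * (e ⬝ᵥ e - 2 * η * qf H e + η ^ 2 * qf (Emat P fun ω => M ω * M ω) e) := by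
  have hM₁ i j : Integrable (fun ω => M ω i j) P := (hM₂ i j).integrable (by norm_num)
  obtain ⟨hint₁, hval₁⟩ := integrable_and_integral_qf_sub_smul_mulVec hHs.inv hM hM₁
    (integrable_mul_mul_apply hM₂ _) p e δ
  obtain ⟨hint₂, hval₂⟩ := integrable_and_integral_qf_sub_smul_mulVec isSymm_one hM hM₁
    (integrable_mul_mul_apply hM₂ _) e e η
  simp only [← qf_one]
  rw [integral_add hint₁ (hint₂.const_mul _), integral_const_mul, hval₁, hval₂, hmean]
  simp only [one_mulVec, Matrix.mul_one, hHs.inv_mulVec_dotProduct_mulVec hH]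
  rfl

end Expectation

theorem mass_one_step_contraction_general
    (d : ℕ) (H : Matrix (Fin d) (Fin d) ℝ) (hH : H.PosDef)
    (μ : ℝ) (hμ : 0 < μ)
    (hμleast : IsLeast {c : ℝ | ∃ v : Fin d → ℝ, v ≠ 0 ∧ H.mulVec v = c • v} μ)
    (κt L : ℝ)
    (Ω : Type) [MeasurableSpace Ω] (P : Measure Ω) [IsProbabilityMeasure P]
    (Ht : Ω → Fin d → Fin d → ℝ)
    (hmom : ∀ i j, MemLp (fun ω => Ht ω i j) 4 P)
    (hpsd : ∀ ω, (Matrix.of (Ht ω)).PosSemidef)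
    (hmean : Emat P (fun ω => Matrix.of (Ht ω)) = H)
    (hκtcond :
      (κt • H - Emat P (fun ω => Matrix.of (Ht ω) * H⁻¹ * Matrix.of (Ht ω))).PosSemidef)
    (hLcond : (L • H - Emat P (fun ω => Matrix.of (Ht ω) * Matrix.of (Ht ω))).PosSemidef)
    (wstar : Fin d → ℝ)
    (η α δ : ℝ) (hα : 0 < α) (hα1 : α ≤ 1) (hδ : 0 < δ)
    (v w u : Fin d → ℝ) (hu : u = (1 / (1 + α)) • (α • v + w)) :
    (∫ ω,
        (qf H⁻¹ (((1 - α) • v + α • u - δ • (Matrix.of (Ht ω)).mulVec (u - wstar)) - wstar)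
          + (δ / α) *
            ((u - η • (Matrix.of (Ht ω)).mulVec (u - wstar) - wstar) ⬝ᵥ
              (u - η • (Matrix.of (Ht ω)).mulVec (u - wstar) - wstar))) ∂P)
      ≤ (1 - α) * (qf H⁻¹ (v - wstar) + (δ / α) * ((w - wstar) ⬝ᵥ (w - wstar)))
        + (α / μ - δ) * ((u - wstar) ⬝ᵥ (u - wstar))
        + (δ ^ 2 * κt + δ * η ^ 2 * L / α - 2 * η * δ / α) * qf H (u - wstar) := by
  set e := u - wstar with he
  set x := v - wstar with hx
  have hw : w - wstar = (1 + α) • e - α • x := by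
    rw [he, hx, hu]
    match_scalars <;> field_simp <;> ring
  have hdet : IsUnit H.det := hH.det_pos.ne'.isUnit
  have hHs : H.IsSymm := isHermitian_iff_isSymm.mp hH.isHermitian
  have hM ω : (of (Ht ω)).IsSymm := isHermitian_iff_isSymm.mp (hpsd ω).isHermitian
  have hM₂ i j : MemLp (fun ω => of (Ht ω) i j) 2 P := (hmom i j).mono_exponent (by norm_num)
  have hstep ω : (1 - α) • v + α • u - δ • of (Ht ω) *ᵥ e - wstar
      = ((1 - α) • x + α • e) - δ • of (Ht ω) *ᵥ e := by
    rw [he, hx]; module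
  simp only [hstep, sub_right_comm u _ wstar, ← he]
  rw [integral_lyapunov_mass_step hdet hHs hM hM₂ hmean, hw]
  have hκbound := qf_le_qf_of_posSemidef_sub hκtcond e
  have hLbound := qf_le_qf_of_posSemidef_sub hLcond e
  rw [qf_smul] at hκbound hLbound
  have hconv := qf_convex_combination_le hH.inv.posSemidef x e hα.le hα1
  have heig : qf H⁻¹ e ≤ e ⬝ᵥ e / μ := by
    rw [le_div_iff₀ hμ, mul_comm]
    exact mul_qf_inv_le_dotProduct_self hdet hμ.le
      (posSemidef_sub_smul_one_of_mem_lowerBounds hH.isHermitian hμleast.2) e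
  linear_combination hconv + α * heig + dotProduct_momentum_le x e hα hα1 hδ.le
    + δ ^ 2 * hκbound + δ * η ^ 2 / α * hLbound

/-- One-step Lyapunov contraction estimate for MaSS on quadratic losses in the interpolation
setting: with `u = (αv + w)/(1+α)`, `w⁺ = u − ηH̃(u − w*)`, `v⁺ = (1−α)v + αu − δH̃(u−w*)`,
`E[‖v⁺ − w*‖²_{H⁻¹} + (δ/α)‖w⁺ − w*‖²] ≤ (1−α)(‖v − w*‖²_{H⁻¹} + (δ/α)‖w − w*‖²)
  + (α/μ − δ)‖u − w*‖² + (δ²κ̃ + δη²L/α − 2ηδ/α)‖u − w*‖²_H`. -/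
theorem mass_one_step_contraction
    (d : ℕ) (H : Matrix (Fin d) (Fin d) ℝ) (hH : H.PosDef)
    (μ : ℝ) (hμ : 0 < μ)
    (hμleast : IsLeast {c : ℝ | ∃ v : Fin d → ℝ, v ≠ 0 ∧ H.mulVec v = c • v} μ)
    (κt L : ℝ) (hκt : 0 < κt) (hL : 0 < L)
    (Ω : Type) [MeasurableSpace Ω] (P : Measure Ω) [IsProbabilityMeasure P]
    (Ht : Ω → Fin d → Fin d → ℝ)
    (hmeas : Measurable Ht)
    (hmom : ∀ i j, MemLp (fun ω => Ht ω i j) 4 P)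
    (hpsd : ∀ ω, (Matrix.of (Ht ω)).PosSemidef)
    (hmean : Emat P (fun ω => Matrix.of (Ht ω)) = H)
    (hκtcond :
      (κt • H - Emat P (fun ω => Matrix.of (Ht ω) * H⁻¹ * Matrix.of (Ht ω))).PosSemidef)
    (hLcond : (L • H - Emat P (fun ω => Matrix.of (Ht ω) * Matrix.of (Ht ω))).PosSemidef)
    (wstar : Fin d → ℝ)
    (η α δ : ℝ) (hη : 0 < η) (hα : 0 < α) (hα1 : α ≤ 1) (hδ : 0 < δ)
    (v w u : Fin d → ℝ) (hu : u = (1 / (1 + α)) • (α • v + w)) :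
    (∫ ω,
        (qf H⁻¹ (((1 - α) • v + α • u - δ • (Matrix.of (Ht ω)).mulVec (u - wstar)) - wstar)
          + (δ / α) *
            ((u - η • (Matrix.of (Ht ω)).mulVec (u - wstar) - wstar) ⬝ᵥ
              (u - η • (Matrix.of (Ht ω)).mulVec (u - wstar) - wstar))) ∂P)
      ≤ (1 - α) * (qf H⁻¹ (v - wstar) + (δ / α) * ((w - wstar) ⬝ᵥ (w - wstar)))
        + (α / μ - δ) * ((u - wstar) ⬝ᵥ (u - wstar))
        + (δ ^ 2 * κt + δ * η ^ 2 * L / α - 2 * η * δ / α) * qf H (u - wstar) :=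
  mass_one_step_contraction_general d H hH μ hμ hμleast κt L Ω P Ht hmom hpsd hmean hκtcond hLcond
    wstar η α δ hα hα1 hδ v w u hu
end

section
/- Let f : ℝ^d → ℝ be a differentiable convex nonnegative function with f(w*) = 0 for some w* ∈ ℝ^d, and assume f is L_m-smooth. Suppose there exist ε ∈ (0,1) and a differentiable function g : ℝ^d → ℝ that is (1/L_m)-strongly convex and (1/μ)-smooth, with g ≥ 0, g(w*) = 0, and ⟨∇g(x), ∇f(z)⟩ ≥ (1−ε)⟨x − w*, z − w*⟩ for all x, z ∈ ℝ^d, where 0 < μ ≤ L_m. Run MaSS with a stochastic gradient oracle satisfying, at each step t conditionally on the past, E[G_t] = ∇f(u_t) and E[‖G_t‖²] ≤ 2 L_m f(u_t), using hyper-parameters η = 1/(2L_m), α = (1−ε)/(2κ_m), δ = 1/(2L_m), where κ_m = L_m/μ. Then there exists a constant C (depending on the initialization) such that for all t ≥ 0, E[f(w_t)] ≤ C · (1 − (1−ε)/(2κ_m))^t. -/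
/-!
With `δ = η` the momentum of MaSS is inert: `u_t = v_t = w_t` for all `t`, so MaSS is SGD with
step size `η = 1 / (2 L_m)`. Along SGD the potential `Φ(x) = ‖x - w*‖² + 2 μ g(x)` contracts in
expectation. Smoothness of `g` gives `Φ(x - η G) ≤ Φ(x) - 2η ⟪x - w* + μ ∇g(x), G⟫ + 2η² ‖G‖²`;
unbiasedness of `G`, convexity of `f` and the correlation hypothesis bound the expected cross term
below by `E f + μ (1 - ε) E ‖x - w*‖²`; the second-moment bound cancels the `E f` terms for this
`η`; and `Φ ≤ 2 ‖x - w*‖²` (smoothness of `g` at its minimiser `w*`) turns the remainder into the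
factor `1 - (1 - ε) / (2 κ_m)`. Finally `f ≤ (L_m / 2) Φ`.
-/

open MeasureTheory RealInnerProductSpace

section Deterministic

variable {E : Type*} [NormedAddCommGroup E]

def lyapunov (g : E → ℝ) (wstar : E) (μ : ℝ) (x : E) : ℝ := ‖x - wstar‖ ^ 2 + 2 * μ * g x

theorem lyapunov_nonneg {g : E → ℝ} {wstar : E} {μ : ℝ} (hμ : 0 ≤ μ) (hg0 : ∀ x, 0 ≤ g x)
    (x : E) : 0 ≤ lyapunov g wstar μ x := by
  have := hg0 x
  unfold lyapunov
  positivity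

variable [InnerProductSpace ℝ E]

theorem ConvexOn.add_inner_le_of_hasGradientAt [CompleteSpace E] {f : E → ℝ} {f' x : E}
    (hf : ConvexOn ℝ Set.univ f) (hx : HasGradientAt f f' x) (z : E) :
    f x + ⟪f', z - x⟫ ≤ f z := by
  have hline : HasDerivAt (f ∘ AffineMap.lineMap (k := ℝ) x z) ⟪f', z - x⟫ 0 := by
    rw [← AffineMap.lineMap_apply_zero x z (k := ℝ)] at hx
    simpa using hx.hasFDerivAt.comp_hasDerivAt 0 AffineMap.hasDerivAt_lineMap
  have hslope := (hf.comp_affineMap (AffineMap.lineMap x z)).le_slope_of_hasDerivAt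
    (Set.mem_univ _) (Set.mem_univ _) zero_lt_one hline
  simp only [slope_def_field, Function.comp_apply, AffineMap.lineMap_apply_one,
    AffineMap.lineMap_apply_zero, sub_zero, div_one] at hslope
  linarith

section Smooth

variable {h : E → ℝ} {h' : E → E} {c : ℝ}

theorem sq_norm_grad_le_of_smooth_of_nonneg (hc : 0 < c)
    (hsm : ∀ x z, h x ≤ h z + ⟪h' z, x - z⟫ + c / 2 * ‖x - z‖ ^ 2) (h0 : ∀ x, 0 ≤ h x)
    (x : E) : ‖h' x‖ ^ 2 ≤ 2 * c * h x := by
  -- the gradient step `x - c⁻¹ • h' x` lowers `h` by at least `‖h' x‖² / (2c)`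
  have hstep := (h0 _).trans (hsm (x - c⁻¹ • h' x) x)
  rw [sub_sub_cancel_left, inner_neg_right, inner_smul_right, real_inner_self_eq_norm_sq,
    norm_neg, norm_smul, Real.norm_of_nonneg (inv_nonneg.2 hc.le)] at hstep
  field_simp at hstep
  nlinarith

theorem grad_eq_zero_of_smooth_of_nonneg (hc : 0 < c)
    (hsm : ∀ x z, h x ≤ h z + ⟪h' z, x - z⟫ + c / 2 * ‖x - z‖ ^ 2) (h0 : ∀ x, 0 ≤ h x)
    {x₀ : E} (hx₀ : h x₀ = 0) : h' x₀ = 0 := by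
  have := sq_norm_grad_le_of_smooth_of_nonneg hc hsm h0 x₀
  rw [hx₀, mul_zero] at this
  exact norm_eq_zero.1 (pow_eq_zero_iff two_ne_zero |>.1 (le_antisymm this (sq_nonneg _)))

theorem le_of_smooth_of_nonneg (hc : 0 < c)
    (hsm : ∀ x z, h x ≤ h z + ⟪h' z, x - z⟫ + c / 2 * ‖x - z‖ ^ 2) (h0 : ∀ x, 0 ≤ h x)
    {x₀ : E} (hx₀ : h x₀ = 0) (x : E) : h x ≤ c / 2 * ‖x - x₀‖ ^ 2 := by
  simpa [hx₀, grad_eq_zero_of_smooth_of_nonneg hc hsm h0 hx₀] using hsm x x₀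

theorem norm_grad_le_of_smooth_of_nonneg (hc : 0 < c)
    (hsm : ∀ x z, h x ≤ h z + ⟪h' z, x - z⟫ + c / 2 * ‖x - z‖ ^ 2) (h0 : ∀ x, 0 ≤ h x)
    {x₀ : E} (hx₀ : h x₀ = 0) (x : E) : ‖h' x‖ ≤ c * ‖x - x₀‖ := by
  refine (pow_le_pow_iff_left₀ (norm_nonneg _) (by positivity) two_ne_zero).1 ?_
  calc ‖h' x‖ ^ 2 ≤ 2 * c * h x := sq_norm_grad_le_of_smooth_of_nonneg hc hsm h0 x
    _ ≤ 2 * c * (c / 2 * ‖x - x₀‖ ^ 2) := by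
      gcongr; exact le_of_smooth_of_nonneg hc hsm h0 hx₀ x
    _ = (c * ‖x - x₀‖) ^ 2 := by ring

end Smooth

section Lyapunov

variable {f g : E → ℝ} {f' g' : E → E} {wstar : E} {μ : ℝ}

/-- Half the gradient of `lyapunov g wstar μ` when `g'` is the gradient of `g`. -/
def lyapunovGrad (g' : E → E) (wstar : E) (μ : ℝ) (x : E) : E := x - wstar + μ • g' x

theorem lyapunov_sub_smul_le (hμ : 0 < μ)
    (hgsm : ∀ x z, g x ≤ g z + ⟪g' z, x - z⟫ + (1 / μ) / 2 * ‖x - z‖ ^ 2) (x y : E) (η : ℝ) :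
    lyapunov g wstar μ (x - η • y) ≤
      lyapunov g wstar μ x - 2 * η * ⟪lyapunovGrad g' wstar μ x, y⟫ + 2 * η ^ 2 * ‖y‖ ^ 2 := by
  have hdist : ‖x - η • y - wstar‖ ^ 2
      = ‖x - wstar‖ ^ 2 - 2 * η * ⟪x - wstar, y⟫ + η ^ 2 * ‖y‖ ^ 2 := by
    rw [sub_right_comm, norm_sub_sq_real, inner_smul_right, norm_smul, mul_pow,
      Real.norm_eq_abs, sq_abs]
    ring
  have hg := hgsm (x - η • y) x
  rw [sub_sub_cancel_left, inner_neg_right, inner_smul_right, norm_neg, norm_smul, mul_pow,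
    Real.norm_eq_abs, sq_abs] at hg
  have hμg := mul_le_mul_of_nonneg_left hg (by positivity : (0 : ℝ) ≤ 2 * μ)
  field_simp at hμg
  rw [lyapunov, lyapunov, lyapunovGrad, hdist, inner_add_left, real_inner_smul_left]
  linarith

theorem add_mul_sq_norm_le_inner_lyapunovGrad [CompleteSpace E] {ε : ℝ}
    (hf' : ∀ x, HasGradientAt f (f' x) x) (hfconv : ConvexOn ℝ Set.univ f) (hfws : f wstar = 0)
    (hcorr : ∀ x z, (1 - ε) * ⟪x - wstar, z - wstar⟫ ≤ ⟪g' x, f' z⟫) (hμ : 0 ≤ μ) (x : E) :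
    f x + μ * (1 - ε) * ‖x - wstar‖ ^ 2 ≤ ⟪lyapunovGrad g' wstar μ x, f' x⟫ := by
  have hf := hfconv.add_inner_le_of_hasGradientAt (hf' x) wstar
  rw [hfws, ← neg_sub, inner_neg_right, real_inner_comm] at hf
  have hg := mul_le_mul_of_nonneg_left (hcorr x x) hμ
  rw [real_inner_self_eq_norm_sq] at hg
  rw [lyapunovGrad, inner_add_left, real_inner_smul_left]
  linarith

theorem lyapunov_le_two_mul_sq_norm (hμ : 0 < μ)
    (hgsm : ∀ x z, g x ≤ g z + ⟪g' z, x - z⟫ + (1 / μ) / 2 * ‖x - z‖ ^ 2)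
    (hg0 : ∀ x, 0 ≤ g x) (hgws : g wstar = 0) (x : E) :
    lyapunov g wstar μ x ≤ 2 * ‖x - wstar‖ ^ 2 := by
  have := mul_le_mul_of_nonneg_left (le_of_smooth_of_nonneg (by positivity) hgsm hg0 hgws x)
    (by positivity : (0 : ℝ) ≤ 2 * μ)
  field_simp at this
  rw [lyapunov]
  linarith

theorem le_mul_lyapunov {L : ℝ} (hL : 0 < L)
    (hfsm : ∀ x z, f x ≤ f z + ⟪f' z, x - z⟫ + L / 2 * ‖x - z‖ ^ 2) (hf0 : ∀ x, 0 ≤ f x)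
    (hfws : f wstar = 0) (hμ : 0 ≤ μ) (hg0 : ∀ x, 0 ≤ g x) (x : E) :
    f x ≤ L / 2 * lyapunov g wstar μ x := by
  have hf := le_of_smooth_of_nonneg hL hfsm hf0 hfws x
  have hLμg : 0 ≤ L * μ * g x := by have := hg0 x; positivity
  rw [lyapunov]
  linarith

end Lyapunov

end Deterministic

theorem mass_iterates_coincide {F : Type*} [AddCommGroup F] [Module ℝ F] {w v u G : ℕ → F}
    {η α : ℝ} (hα : 1 + α ≠ 0) (hv0 : v 0 = w 0) (hu0 : u 0 = w 0)
    (hw : ∀ t, w (t + 1) = u t - η • G t)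
    (hv : ∀ t, v (t + 1) = (1 - α) • v t + α • u t - η • G t)
    (hu : ∀ t, u (t + 1) = (1 / (1 + α)) • (α • v (t + 1) + w (t + 1))) (t : ℕ) :
    u t = w t ∧ v t = w t := by
  induction t with
  | zero => exact ⟨hu0, hv0⟩
  | succ t ih =>
    have hvw : v (t + 1) = w (t + 1) := by
      rw [hv, hw, ih.1, ih.2, ← add_smul, sub_add_cancel, one_smul]
    refine ⟨?_, hvw⟩
    have hsum : α • w (t + 1) + w (t + 1) = (1 + α) • w (t + 1) := by module
    rw [hu, hvw, hsum, smul_smul, one_div_mul_cancel hα, one_smul]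

section Stochastic

variable {Ω : Type*} {m m0 : MeasurableSpace Ω} {P : Measure Ω} {E : Type*} [NormedAddCommGroup E]

theorem measurable_of_hasGradientAt [InnerProductSpace ℝ E] [CompleteSpace E]
    [MeasurableSpace E] [BorelSpace E] {f : E → ℝ} {f' : E → E}
    (hf' : ∀ x, HasGradientAt f (f' x) x) : Measurable f' := by
  have : f' = fun x => (InnerProductSpace.toDual ℝ E).symm (fderiv ℝ f x) :=
    funext fun x => (hf' x).gradient.symm
  rw [this]
  exact (InnerProductSpace.toDual ℝ E).symm.continuous.measurable.comp (measurable_fderiv ℝ f)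

theorem integral_inner_eq_of_condExp_eq [InnerProductSpace ℝ E] [CompleteSpace E] (hm : m ≤ m0)
    [SigmaFinite (P.trim hm)] {c G F : Ω → E} (hc : StronglyMeasurable[m] c)
    (hcG : Integrable (fun ω => ⟪c ω, G ω⟫) P) (hG : Integrable G P) (hGF : P[G|m] =ᵐ[P] F) :
    ∫ ω, ⟪c ω, G ω⟫ ∂P = ∫ ω, ⟪c ω, F ω⟫ ∂P := by
  rw [← integral_condExp hm]
  refine integral_congr_ae ?_
  filter_upwards [condExp_bilin_of_stronglyMeasurable_left (innerSL ℝ) hc hcG hG, hGF]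
    with ω hpull hω
  rw [← hω]
  exact hpull

theorem integral_le_of_condExp_le (hm : m ≤ m0) [SigmaFinite (P.trim hm)] {φ ψ : Ω → ℝ}
    (hψ : Integrable ψ P) (h : P[φ|m] ≤ᵐ[P] ψ) : ∫ ω, φ ω ∂P ≤ ∫ ω, ψ ω ∂P :=
  integral_condExp (μ := P) (f := φ) hm ▸ integral_mono_ae integrable_condExp hψ h

theorem MeasureTheory.MemLp.of_sub_smul_recursion [NormedSpace ℝ E] {p : ENNReal}
    {w G : ℕ → Ω → E} {η : ℝ} (hw : ∀ t ω, w (t + 1) ω = w t ω - η • G t ω)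
    (hw0 : MemLp (w 0) p P) (hG : ∀ t, MemLp (G t) p P) (t : ℕ) : MemLp (w t) p P := by
  induction t with
  | zero => exact hw0
  | succ t ih =>
    rw [show w (t + 1) = w t - η • G t from funext (hw t)]
    exact ih.sub ((hG t).const_smul η)

theorem MeasureTheory.MemLp.integrable_inner [InnerProductSpace ℝ E] {X Y : Ω → E}
    (hX : MemLp X 2 P) (hY : MemLp Y 2 P) : Integrable (fun ω => ⟪X ω, Y ω⟫) P :=
  memLp_one_iff_integrable.1 ((innerSL ℝ).memLp_of_bilin 1 hX hY)

variable [MeasurableSpace E] [BorelSpace E] [IsFiniteMeasure P]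

theorem MeasureTheory.MemLp.comp_of_norm_le_mul_norm_sub {F : Type*} [NormedAddCommGroup F]
    [MeasurableSpace F] [BorelSpace F] [SecondCountableTopology F] {φ : E → F}
    (hφ : Measurable φ) {p : ENNReal} {X : Ω → E} (hX : MemLp X p P) {C : ℝ} {x₀ : E}
    (hφX : ∀ x, ‖φ x‖ ≤ C * ‖x - x₀‖) : MemLp (fun ω => φ (X ω)) p P :=
  (hX.sub (memLp_const x₀)).of_le_mul (hφ.comp_aemeasurable hX.aemeasurable).aestronglyMeasurable
    (ae_of_all _ fun ω => hφX (X ω))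

theorem MeasureTheory.Integrable.comp_of_norm_le_mul_sq_norm_sub {φ : E → ℝ}
    (hφ : Measurable φ) {X : Ω → E} (hX : MemLp X 2 P) {C : ℝ} {x₀ : E}
    (hφX : ∀ x, ‖φ x‖ ≤ C * ‖x - x₀‖ ^ 2) : Integrable (fun ω => φ (X ω)) P := by
  have hX₀ := hX.sub (memLp_const x₀)
  refine (((memLp_two_iff_integrable_sq_norm hX₀.1).1 hX₀).const_mul C).mono'
    (hφ.comp_aemeasurable hX.aemeasurable).aestronglyMeasurable (ae_of_all _ fun ω => hφX (X ω))

variable [InnerProductSpace ℝ E] [CompleteSpace E] {f g : E → ℝ} {f' g' : E → E} {wstar : E}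
  {μ : ℝ}

theorem MeasureTheory.Integrable.comp_of_smooth_of_nonneg {h : E → ℝ} {h' : E → E} {c : ℝ}
    {x₀ : E} (hc : 0 < c) (hh' : ∀ x, HasGradientAt h (h' x) x)
    (hsm : ∀ x z, h x ≤ h z + ⟪h' z, x - z⟫ + c / 2 * ‖x - z‖ ^ 2) (h0 : ∀ x, 0 ≤ h x)
    (hx₀ : h x₀ = 0) {X : Ω → E} (hX : MemLp X 2 P) : Integrable (fun ω => h (X ω)) P :=
  Integrable.comp_of_norm_le_mul_sq_norm_sub
    (continuous_iff_continuousAt.2 fun x => (hh' x).continuousAt).measurable hX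
    fun x => (Real.norm_of_nonneg (h0 x)).trans_le (le_of_smooth_of_nonneg hc hsm h0 hx₀ x)

theorem integrable_lyapunov_comp (hμ : 0 < μ) (hg' : ∀ x, HasGradientAt g (g' x) x)
    (hgsm : ∀ x z, g x ≤ g z + ⟪g' z, x - z⟫ + (1 / μ) / 2 * ‖x - z‖ ^ 2)
    (hg0 : ∀ x, 0 ≤ g x) (hgws : g wstar = 0) {X : Ω → E} (hX : MemLp X 2 P) :
    Integrable (fun ω => lyapunov g wstar μ (X ω)) P := by
  have hg : Continuous g := continuous_iff_continuousAt.2 fun x => (hg' x).continuousAt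
  refine Integrable.comp_of_norm_le_mul_sq_norm_sub (C := 2) (x₀ := wstar)
    (by unfold lyapunov; fun_prop) hX fun x => ?_
  rw [Real.norm_of_nonneg (lyapunov_nonneg hμ.le hg0 x)]
  exact lyapunov_le_two_mul_sq_norm hμ hgsm hg0 hgws x

theorem integral_le_mul_integral_lyapunov {L : ℝ} (hL : 0 < L) (hμ : 0 < μ)
    (hfsm : ∀ x z, f x ≤ f z + ⟪f' z, x - z⟫ + L / 2 * ‖x - z‖ ^ 2) (hf0 : ∀ x, 0 ≤ f x)
    (hfws : f wstar = 0) (hg' : ∀ x, HasGradientAt g (g' x) x)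
    (hgsm : ∀ x z, g x ≤ g z + ⟪g' z, x - z⟫ + (1 / μ) / 2 * ‖x - z‖ ^ 2)
    (hg0 : ∀ x, 0 ≤ g x) (hgws : g wstar = 0) {X : Ω → E} (hX : MemLp X 2 P) :
    ∫ ω, f (X ω) ∂P ≤ L / 2 * ∫ ω, lyapunov g wstar μ (X ω) ∂P := by
  rw [← integral_const_mul]
  exact integral_mono_of_nonneg (ae_of_all _ fun ω => hf0 _)
    ((integrable_lyapunov_comp hμ hg' hgsm hg0 hgws hX).const_mul _)
    (ae_of_all _ fun ω => le_mul_lyapunov hL hfsm hf0 hfws hμ.le hg0 _)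

variable [SecondCountableTopology E]

theorem MeasureTheory.MemLp.grad_comp_of_smooth_of_nonneg {h : E → ℝ} {h' : E → E} {c : ℝ}
    {x₀ : E} (hc : 0 < c) (hh' : ∀ x, HasGradientAt h (h' x) x)
    (hsm : ∀ x z, h x ≤ h z + ⟪h' z, x - z⟫ + c / 2 * ‖x - z‖ ^ 2) (h0 : ∀ x, 0 ≤ h x)
    (hx₀ : h x₀ = 0) {p : ENNReal} {X : Ω → E} (hX : MemLp X p P) :
    MemLp (fun ω => h' (X ω)) p P :=
  MemLp.comp_of_norm_le_mul_norm_sub (measurable_of_hasGradientAt hh') hX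
    (norm_grad_le_of_smooth_of_nonneg hc hsm h0 hx₀)

theorem MeasureTheory.StronglyMeasurable.lyapunovGrad_comp (hg' : ∀ x, HasGradientAt g (g' x) x)
    {X : Ω → E} (hX : StronglyMeasurable[m] X) :
    StronglyMeasurable[m] (fun ω => lyapunovGrad g' wstar μ (X ω)) :=
  ((hX.sub stronglyMeasurable_const).measurable.add
    (((measurable_of_hasGradientAt hg').comp hX.measurable).const_smul μ)).stronglyMeasurable

theorem MeasureTheory.MemLp.lyapunovGrad_comp (hμ : 0 < μ) (hg' : ∀ x, HasGradientAt g (g' x) x)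
    (hgsm : ∀ x z, g x ≤ g z + ⟪g' z, x - z⟫ + (1 / μ) / 2 * ‖x - z‖ ^ 2)
    (hg0 : ∀ x, 0 ≤ g x) (hgws : g wstar = 0) {X : Ω → E} (hX : MemLp X 2 P) :
    MemLp (fun ω => lyapunovGrad g' wstar μ (X ω)) 2 P :=
  (hX.sub (memLp_const wstar)).add
    ((hX.grad_comp_of_smooth_of_nonneg (by positivity) hg' hgsm hg0 hgws).const_smul μ)

theorem integral_lyapunov_sub_smul_le (hμ : 0 < μ) (hg' : ∀ x, HasGradientAt g (g' x) x)
    (hgsm : ∀ x z, g x ≤ g z + ⟪g' z, x - z⟫ + (1 / μ) / 2 * ‖x - z‖ ^ 2)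
    (hg0 : ∀ x, 0 ≤ g x) (hgws : g wstar = 0) {X G : Ω → E} (hX : MemLp X 2 P)
    (hG : MemLp G 2 P) (η : ℝ) :
    ∫ ω, lyapunov g wstar μ (X ω - η • G ω) ∂P ≤ ∫ ω, lyapunov g wstar μ (X ω) ∂P
      - 2 * η * ∫ ω, ⟪lyapunovGrad g' wstar μ (X ω), G ω⟫ ∂P
      + 2 * η ^ 2 * ∫ ω, ‖G ω‖ ^ 2 ∂P := by
  have hΦ := integrable_lyapunov_comp hμ hg' hgsm hg0 hgws hX
  have hΦ' := integrable_lyapunov_comp hμ hg' hgsm hg0 hgws (hX.sub (hG.const_smul η))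
  have hinner := (hX.lyapunovGrad_comp hμ hg' hgsm hg0 hgws).integrable_inner hG
  have hG2 := (memLp_two_iff_integrable_sq_norm hG.1).1 hG
  calc ∫ ω, lyapunov g wstar μ (X ω - η • G ω) ∂P
      ≤ ∫ ω, (lyapunov g wstar μ (X ω) - 2 * η * ⟪lyapunovGrad g' wstar μ (X ω), G ω⟫
          + 2 * η ^ 2 * ‖G ω‖ ^ 2) ∂P :=
        integral_mono hΦ' ((hΦ.sub (hinner.const_mul _)).add (hG2.const_mul _))
          fun ω => lyapunov_sub_smul_le hμ hgsm (X ω) (G ω) η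
    _ = _ := by
      rw [integral_add _ (hG2.const_mul _), integral_sub hΦ (hinner.const_mul _),
        integral_const_mul, integral_const_mul]
      exact hΦ.sub (hinner.const_mul _)

theorem integral_lyapunov_sgd_step [IsProbabilityMeasure P] (hm : m ≤ m0) {L ε : ℝ}
    (hL : 0 < L) (hμ : 0 < μ) (hε : ε ≤ 1)
    (hf' : ∀ x, HasGradientAt f (f' x) x) (hfconv : ConvexOn ℝ Set.univ f)
    (hf0 : ∀ x, 0 ≤ f x) (hfws : f wstar = 0)
    (hfsm : ∀ x z, f x ≤ f z + ⟪f' z, x - z⟫ + L / 2 * ‖x - z‖ ^ 2)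
    (hg' : ∀ x, HasGradientAt g (g' x) x)
    (hgsm : ∀ x z, g x ≤ g z + ⟪g' z, x - z⟫ + (1 / μ) / 2 * ‖x - z‖ ^ 2)
    (hg0 : ∀ x, 0 ≤ g x) (hgws : g wstar = 0)
    (hcorr : ∀ x z, (1 - ε) * ⟪x - wstar, z - wstar⟫ ≤ ⟪g' x, f' z⟫)
    {X G : Ω → E} (hXm : StronglyMeasurable[m] X) (hX : MemLp X 2 P) (hG : MemLp G 2 P)
    (hGmean : P[G|m] =ᵐ[P] fun ω => f' (X ω))
    (hGsq : P[fun ω => ‖G ω‖ ^ 2|m] ≤ᵐ[P] fun ω => 2 * L * f (X ω)) :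
    ∫ ω, lyapunov g wstar μ (X ω - (1 / (2 * L)) • G ω) ∂P
      ≤ (1 - (1 - ε) / (2 * (L / μ))) * ∫ ω, lyapunov g wstar μ (X ω) ∂P := by
  set η := 1 / (2 * L) with hη
  have hgradX := hX.lyapunovGrad_comp hμ hg' hgsm hg0 hgws
  have hf'X := hX.grad_comp_of_smooth_of_nonneg hL hf' hfsm hf0 hfws
  have hfX := Integrable.comp_of_smooth_of_nonneg hL hf' hfsm hf0 hfws hX
  have hX₀ := hX.sub (memLp_const wstar)
  have hX2 : Integrable (fun ω => ‖X ω - wstar‖ ^ 2) P :=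
    (memLp_two_iff_integrable_sq_norm hX₀.1).1 hX₀
  have hΦ := integrable_lyapunov_comp hμ hg' hgsm hg0 hgws hX
  have hunbiased : ∫ ω, ⟪lyapunovGrad g' wstar μ (X ω), G ω⟫ ∂P
      = ∫ ω, ⟪lyapunovGrad g' wstar μ (X ω), f' (X ω)⟫ ∂P :=
    integral_inner_eq_of_condExp_eq hm (hXm.lyapunovGrad_comp hg')
      (hgradX.integrable_inner hG) (hG.integrable one_le_two) hGmean
  have hsecond : ∫ ω, ‖G ω‖ ^ 2 ∂P ≤ 2 * L * ∫ ω, f (X ω) ∂P := by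
    rw [← integral_const_mul]
    exact integral_le_of_condExp_le hm (hfX.const_mul _) hGsq
  have hdescent : ∫ ω, f (X ω) ∂P + μ * (1 - ε) * ∫ ω, ‖X ω - wstar‖ ^ 2 ∂P
      ≤ ∫ ω, ⟪lyapunovGrad g' wstar μ (X ω), f' (X ω)⟫ ∂P := by
    rw [← integral_const_mul, ← integral_add hfX (hX2.const_mul _)]
    exact integral_mono (hfX.add (hX2.const_mul _)) (hgradX.integrable_inner hf'X)
      fun ω => add_mul_sq_norm_le_inner_lyapunovGrad hf' hfconv hfws hcorr hμ.le (X ω)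
  have hΦX : ∫ ω, lyapunov g wstar μ (X ω) ∂P ≤ 2 * ∫ ω, ‖X ω - wstar‖ ^ 2 ∂P := by
    rw [← integral_const_mul]
    exact integral_mono hΦ (hX2.const_mul _) fun ω => lyapunov_le_two_mul_sq_norm hμ hgsm hg0 hgws _
  have hstep := integral_lyapunov_sub_smul_le hμ hg' hgsm hg0 hgws hX hG η
  have hrate : (1 - ε) / (2 * (L / μ)) = η * μ * (1 - ε) := by
    rw [hη]; field_simp
  have hη0 : 0 ≤ η := by positivity
  -- with `η = 1 / (2L)` the variance term `2η² E‖G‖²` is exactly paid for by `2η E f`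
  have hvar : 2 * η ^ 2 * ∫ ω, ‖G ω‖ ^ 2 ∂P ≤ 2 * η * ∫ ω, f (X ω) ∂P := by
    have hηL : 2 * η ^ 2 * (2 * L) = 2 * η := by rw [hη]; field_simp
    calc 2 * η ^ 2 * ∫ ω, ‖G ω‖ ^ 2 ∂P ≤ 2 * η ^ 2 * (2 * L * ∫ ω, f (X ω) ∂P) := by
          gcongr
      _ = 2 * η * ∫ ω, f (X ω) ∂P := by linear_combination (∫ ω, f (X ω) ∂P) * hηL
  have hcross := mul_le_mul_of_nonneg_left hdescent (by positivity : 0 ≤ 2 * η)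
  have hΦX' := mul_le_mul_of_nonneg_left hΦX (mul_nonneg (mul_nonneg hη0 hμ.le) (sub_nonneg.2 hε))
  rw [hunbiased] at hstep
  rw [hrate]
  linear_combination hstep + hvar + hcross + hΦX'

theorem integral_lyapunov_sgd_le [IsProbabilityMeasure P] (ℱ : Filtration ℕ m0) {L ε : ℝ}
    (hμL : μ ≤ L) (hμ : 0 < μ) (hε : ε ∈ Set.Icc 0 1)
    (hf' : ∀ x, HasGradientAt f (f' x) x) (hfconv : ConvexOn ℝ Set.univ f)
    (hf0 : ∀ x, 0 ≤ f x) (hfws : f wstar = 0)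
    (hfsm : ∀ x z, f x ≤ f z + ⟪f' z, x - z⟫ + L / 2 * ‖x - z‖ ^ 2)
    (hg' : ∀ x, HasGradientAt g (g' x) x)
    (hgsm : ∀ x z, g x ≤ g z + ⟪g' z, x - z⟫ + (1 / μ) / 2 * ‖x - z‖ ^ 2)
    (hg0 : ∀ x, 0 ≤ g x) (hgws : g wstar = 0)
    (hcorr : ∀ x z, (1 - ε) * ⟪x - wstar, z - wstar⟫ ≤ ⟪g' x, f' z⟫)
    {w G : ℕ → Ω → E} (hw : ∀ t ω, w (t + 1) ω = w t ω - (1 / (2 * L)) • G t ω)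
    (hwL2 : ∀ t, MemLp (w t) 2 P) (hwm : ∀ t, StronglyMeasurable[ℱ t] (w t))
    (hG : ∀ t, MemLp (G t) 2 P) (hGmean : ∀ t, P[G t|ℱ t] =ᵐ[P] fun ω => f' (w t ω))
    (hGsq : ∀ t, P[fun ω => ‖G t ω‖ ^ 2|ℱ t] ≤ᵐ[P] fun ω => 2 * L * f (w t ω)) (t : ℕ) :
    ∫ ω, lyapunov g wstar μ (w t ω) ∂P
      ≤ (1 - (1 - ε) / (2 * (L / μ))) ^ t * ∫ ω, lyapunov g wstar μ (w 0 ω) ∂P := by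
  have hL : 0 < L := hμ.trans_le hμL
  have hρ : 0 ≤ 1 - (1 - ε) / (2 * (L / μ)) := by
    have : 1 ≤ L / μ := (one_le_div hμ).2 hμL
    rw [sub_nonneg, div_le_one (by positivity)]
    linarith [hε.1]
  refine le_geom (u := fun t => ∫ ω, lyapunov g wstar μ (w t ω) ∂P) hρ t fun k _ => ?_
  simp_rw [hw k]
  exact integral_lyapunov_sgd_step (ℱ.le k) hL hμ hε.2 hf' hfconv hf0 hfws hfsm hg' hgsm hg0 hgws
    hcorr (hwm k) (hwL2 k) (hG k) (hGmean k) (hGsq k)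

end Stochastic

theorem mass_convex_convergence_general
    (d : ℕ)
    (f g : EuclideanSpace ℝ (Fin d) → ℝ)
    (f' g' : EuclideanSpace ℝ (Fin d) → EuclideanSpace ℝ (Fin d))
    (hf' : ∀ x, HasGradientAt f (f' x) x)
    (hg' : ∀ x, HasGradientAt g (g' x) x)
    (hfconv : ConvexOn ℝ Set.univ f)
    (hfnonneg : ∀ x, 0 ≤ f x)
    (wstar : EuclideanSpace ℝ (Fin d)) (hfws : f wstar = 0)
    (Lm μ : ℝ) (hμ : 0 < μ) (hμL : μ ≤ Lm)
    (hfsmooth : ∀ x z, f x ≤ f z + ⟪f' z, x - z⟫ + Lm / 2 * ‖x - z‖ ^ 2)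
    (ε : ℝ) (hε : ε ∈ Set.Ioo (0 : ℝ) 1)
    (hgsm : ∀ x z, g x ≤ g z + ⟪g' z, x - z⟫ + (1 / μ) / 2 * ‖x - z‖ ^ 2)
    (hgnonneg : ∀ x, 0 ≤ g x) (hgws : g wstar = 0)
    (hcorr : ∀ x z, (1 - ε) * ⟪x - wstar, z - wstar⟫ ≤ ⟪g' x, f' z⟫)
    (η α δ : ℝ)
    (hηdef : η = 1 / (2 * Lm)) (hαdef : α = (1 - ε) / (2 * (Lm / μ)))
    (hδdef : δ = 1 / (2 * Lm))
    (Ω : Type) [m0 : MeasurableSpace Ω] (P : Measure Ω) [IsProbabilityMeasure P]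
    (ℱ : Filtration ℕ m0)
    (G : ℕ → Ω → EuclideanSpace ℝ (Fin d))
    (w v u : ℕ → Ω → EuclideanSpace ℝ (Fin d))
    (w₀ : EuclideanSpace ℝ (Fin d))
    (hw0 : ∀ ω, w 0 ω = w₀) (hv0 : ∀ ω, v 0 ω = w₀) (hu0 : ∀ ω, u 0 ω = w₀)
    (hw : ∀ t ω, w (t + 1) ω = u t ω - η • G t ω)
    (hv : ∀ t ω, v (t + 1) ω = (1 - α) • v t ω + α • u t ω - δ • G t ω)
    (hu : ∀ t ω, u (t + 1) ω = (1 / (1 + α)) • (α • v (t + 1) ω + w (t + 1) ω))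
    (huadapted : ∀ t, StronglyMeasurable[ℱ t] (u t))
    (hGint : ∀ t, Integrable (G t) P)
    (hGsqint : ∀ t, Integrable (fun ω => ‖G t ω‖ ^ 2) P)
    (hGmean : ∀ t, P[G t | ℱ t] =ᵐ[P] fun ω => f' (u t ω))
    (hGsq : ∀ t, P[(fun ω => ‖G t ω‖ ^ 2) | ℱ t] ≤ᵐ[P] fun ω => 2 * Lm * f (u t ω)) :
    ∃ C : ℝ, ∀ t : ℕ,
      (∫ ω, f (w t ω) ∂P) ≤ C * (1 - (1 - ε) / (2 * (Lm / μ))) ^ t := by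
  have hL : 0 < Lm := hμ.trans_le hμL
  have hε' : ε ∈ Set.Icc 0 1 := Set.Ioo_subset_Icc_self hε
  subst hηdef hδdef hαdef
  have hα : 1 + (1 - ε) / (2 * (Lm / μ)) ≠ 0 :=
    (add_pos_of_pos_of_nonneg one_pos (div_nonneg (sub_nonneg.2 hε'.2) (by positivity))).ne'
  have hu_eq : u = w := funext fun t => funext fun ω =>
    (mass_iterates_coincide (w := (w · ω)) (v := (v · ω)) (u := (u · ω)) (G := (G · ω)) hα
      ((hv0 ω).trans (hw0 ω).symm) ((hu0 ω).trans (hw0 ω).symm)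
      (fun t => hw t ω) (fun t => hv t ω) (fun t => hu t ω) t).1
  rw [hu_eq] at hw huadapted hGmean hGsq
  have hw0' : w 0 = fun _ => w₀ := funext hw0
  have hGL2 t : MemLp (G t) 2 P := (memLp_two_iff_integrable_sq_norm (hGint t).1).2 (hGsqint t)
  have hwL2 := MemLp.of_sub_smul_recursion hw (hw0' ▸ memLp_const w₀) hGL2
  have hΦ := integral_lyapunov_sgd_le ℱ hμL hμ hε' hf' hfconv hfnonneg hfws hfsmooth hg' hgsm
    hgnonneg hgws hcorr hw hwL2 huadapted hGL2 hGmean hGsq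
  refine ⟨Lm / 2 * lyapunov g wstar μ w₀, fun t => ?_⟩
  calc ∫ ω, f (w t ω) ∂P ≤ Lm / 2 * ∫ ω, lyapunov g wstar μ (w t ω) ∂P :=
        integral_le_mul_integral_lyapunov hL hμ hfsmooth hfnonneg hfws hg' hgsm hgnonneg hgws
          (hwL2 t)
    _ ≤ Lm / 2 * ((1 - (1 - ε) / (2 * (Lm / μ))) ^ t * lyapunov g wstar μ w₀) := by
        gcongr
        simpa [hw0'] using hΦ t
    _ = _ := by ring

/-- Convergence of MaSS for general convex losses in the interpolation setting
(Theorem 4): under the existence of a `(1/L_m)`-strongly convex, `(1/μ)`-smooth Lyapunov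
function `g` correlated with `f`, running MaSS with an unbiased stochastic gradient oracle
whose conditional second moment is bounded by `2L_m f(u_t)`, with hyper-parameters
`η = 1/(2L_m)`, `α = (1−ε)/(2κ_m)`, `δ = 1/(2L_m)` where `κ_m = L_m/μ`, there is a
constant `C` with `E[f(w_t)] ≤ C (1 − (1−ε)/(2κ_m))^t`. -/
theorem mass_convex_convergence
    (d : ℕ)
    (f g : EuclideanSpace ℝ (Fin d) → ℝ)
    (f' g' : EuclideanSpace ℝ (Fin d) → EuclideanSpace ℝ (Fin d))
    (hf' : ∀ x, HasGradientAt f (f' x) x)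
    (hg' : ∀ x, HasGradientAt g (g' x) x)
    (hfconv : ConvexOn ℝ Set.univ f)
    (hfnonneg : ∀ x, 0 ≤ f x)
    (wstar : EuclideanSpace ℝ (Fin d)) (hfws : f wstar = 0)
    (Lm μ : ℝ) (hμ : 0 < μ) (hμL : μ ≤ Lm)
    (hfsmooth : ∀ x z, f x ≤ f z + ⟪f' z, x - z⟫ + Lm / 2 * ‖x - z‖ ^ 2)
    (ε : ℝ) (hε : ε ∈ Set.Ioo (0 : ℝ) 1)
    (hgsc : ∀ x z, g z + ⟪g' z, x - z⟫ + (1 / Lm) / 2 * ‖x - z‖ ^ 2 ≤ g x)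
    (hgsm : ∀ x z, g x ≤ g z + ⟪g' z, x - z⟫ + (1 / μ) / 2 * ‖x - z‖ ^ 2)
    (hgnonneg : ∀ x, 0 ≤ g x) (hgws : g wstar = 0)
    (hcorr : ∀ x z, (1 - ε) * ⟪x - wstar, z - wstar⟫ ≤ ⟪g' x, f' z⟫)
    (η α δ : ℝ)
    (hηdef : η = 1 / (2 * Lm)) (hαdef : α = (1 - ε) / (2 * (Lm / μ)))
    (hδdef : δ = 1 / (2 * Lm))
    (Ω : Type) [m0 : MeasurableSpace Ω] (P : Measure Ω) [IsProbabilityMeasure P]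
    (ℱ : Filtration ℕ m0)
    (G : ℕ → Ω → EuclideanSpace ℝ (Fin d))
    (w v u : ℕ → Ω → EuclideanSpace ℝ (Fin d))
    (w₀ : EuclideanSpace ℝ (Fin d))
    (hw0 : ∀ ω, w 0 ω = w₀) (hv0 : ∀ ω, v 0 ω = w₀) (hu0 : ∀ ω, u 0 ω = w₀)
    (hw : ∀ t ω, w (t + 1) ω = u t ω - η • G t ω)
    (hv : ∀ t ω, v (t + 1) ω = (1 - α) • v t ω + α • u t ω - δ • G t ω)
    (hu : ∀ t ω, u (t + 1) ω = (1 / (1 + α)) • (α • v (t + 1) ω + w (t + 1) ω))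
    (huadapted : ∀ t, StronglyMeasurable[ℱ t] (u t))
    (hGmeas : ∀ t, StronglyMeasurable[ℱ (t + 1)] (G t))
    (hGint : ∀ t, Integrable (G t) P)
    (hGsqint : ∀ t, Integrable (fun ω => ‖G t ω‖ ^ 2) P)
    (hGmean : ∀ t, P[G t | ℱ t] =ᵐ[P] fun ω => f' (u t ω))
    (hGsq : ∀ t, P[(fun ω => ‖G t ω‖ ^ 2) | ℱ t] ≤ᵐ[P] fun ω => 2 * Lm * f (u t ω)) :
    ∃ C : ℝ, ∀ t : ℕ,
      (∫ ω, f (w t ω) ∂P) ≤ C * (1 - (1 - ε) / (2 * (Lm / μ))) ^ t :=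
  mass_convex_convergence_general d f g f' g' hf' hg' hfconv hfnonneg wstar hfws Lm μ hμ hμL
    hfsmooth ε hε hgsm hgnonneg hgws hcorr η α δ hηdef hαdef hδdef Ω (m0 := m0) P ℱ G w v u w₀ hw0
    hv0 hu0 hw hv hu huadapted hGint hGsqint hGmean hGsq
end

section
/- Let x̃₁, …, x̃_m be i.i.d. random vectors in ℝ^d with E[x̃₁ x̃₁ᵀ] = H, where H is symmetric positive definite, and suppose E[(x̃₁ᵀ H⁻¹ x̃₁) · x̃₁ x̃₁ᵀ] ⪯ κ̃ H for a constant κ̃ > 0. Define the mini-batch matrix H̃_m = (1/m) Σ_{i=1}^m x̃ᵢ x̃ᵢᵀ. Then E[H̃_m H⁻¹ H̃_m] − H ⪯ (1/m)(κ̃ − 1) H; equivalently E[H̃_m H⁻¹ H̃_m] ⪯ (κ̃/m + (m−1)/m) H. -/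
/-!
Expanding the square, `H̃_m H⁻¹ H̃_m` is the average over the `m²` ordered pairs `(i, j)` of
`x̃ᵢx̃ᵢᵀ H⁻¹ x̃ⱼx̃ⱼᵀ`. For `i ≠ j` independence factors the expectation as
`E[x̃ᵢx̃ᵢᵀ] H⁻¹ E[x̃ⱼx̃ⱼᵀ] = H H⁻¹ H = H`, while a diagonal term is `(x̃ᵢᵀH⁻¹x̃ᵢ) x̃ᵢx̃ᵢᵀ`, whose
expectation `Dᵢ` satisfies `Dᵢ ⪯ κ̃ H`. Hence `E[H̃_m H⁻¹ H̃_m] = (Σᵢ Dᵢ + m(m-1) H) / m²` and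
`κ̃_m H - E[H̃_m H⁻¹ H̃_m] = Σᵢ (κ̃ H - Dᵢ) / m² ⪰ 0`.
-/

open MeasureTheory ProbabilityTheory Matrix
open scoped ENNReal

section Algebra

variable {n ι R : Type*} [Fintype n] [CommRing R]

theorem smul_sum_mul_mul_smul_sum (c : R) (s : Finset ι) (A : ι → Matrix n n R)
    (C : Matrix n n R) :
    (c • ∑ i ∈ s, A i) * C * (c • ∑ j ∈ s, A j) = (c * c) • ∑ i ∈ s, ∑ j ∈ s, A i * C * A j := by
  simp only [Matrix.smul_mul, Matrix.mul_smul, Finset.sum_mul, Finset.mul_sum, Finset.smul_sum,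
    smul_smul]
  exact Finset.sum_comm

theorem vecMulVec_self_mul_mul_vecMulVec_self (v : n → R) (C : Matrix n n R) :
    vecMulVec v v * C * vecMulVec v v = (v ⬝ᵥ C *ᵥ v) • vecMulVec v v := by
  rw [Matrix.mul_assoc, mul_vecMulVec, vecMulVec_mul_vecMulVec, vecMulVec_smul]

end Algebra

theorem Fintype.sum_sum_eq_sum_diag_add_nsmul {ι M : Type*} [Fintype ι] [DecidableEq ι]
    [AddCommMonoid M] {f : ι → ι → M} {c : M} (hf : ∀ i j, i ≠ j → f i j = c) :
    ∑ i, ∑ j, f i j = ∑ i, f i i + (Fintype.card ι * (Fintype.card ι - 1)) • c := by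
  have hrow : ∀ i, ∑ j, f i j = f i i + (Fintype.card ι - 1) • c := by
    intro i
    rw [← Finset.add_sum_erase _ _ (Finset.mem_univ i),
      Finset.sum_congr rfl fun j hj => hf i j (Finset.ne_of_mem_erase hj).symm,
      Finset.sum_const, Finset.card_erase_of_mem (Finset.mem_univ i), Finset.card_univ]
  rw [Finset.sum_congr rfl fun i _ => hrow i, Finset.sum_add_distrib, Finset.sum_const,
    Finset.card_univ, mul_nsmul']

section Integral

variable {Ω n ι : Type*} [MeasurableSpace Ω] {P : Measure Ω}

/-- `Matrix` carries no global normed structure, so the expectation of a random matrix is taken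
entry by entry, as in the statement. -/
noncomputable def matrixIntegral (P : Measure Ω) (A : Ω → Matrix n n ℝ) : Matrix n n ℝ :=
  of fun k l => ∫ ω, A ω k l ∂P

theorem matrixIntegral_smul (c : ℝ) (A : Ω → Matrix n n ℝ) :
    matrixIntegral P (fun ω => c • A ω) = c • matrixIntegral P A := by
  ext k l
  simp [matrixIntegral, integral_const_mul]

theorem matrixIntegral_sum (s : Finset ι) {A : ι → Ω → Matrix n n ℝ}
    (hA : ∀ i ∈ s, ∀ k l, Integrable (fun ω => A i ω k l) P) :
    matrixIntegral P (fun ω => ∑ i ∈ s, A i ω) = ∑ i ∈ s, matrixIntegral P (A i) := by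
  ext k l
  simp only [matrixIntegral, of_apply, Matrix.sum_apply]
  exact integral_finsetSum s fun i hi => hA i hi k l

theorem memLp_two_mul_of_memLp_four {f g : Ω → ℝ} (hf : MemLp f 4 P) (hg : MemLp g 4 P) :
    MemLp (fun ω => f ω * g ω) 2 P :=
  haveI : ENNReal.HolderTriple 4 4 2 := ⟨by
    rw [← two_mul, show (4 : ℝ≥0∞) = 2 * 2 by norm_num, ENNReal.mul_inv (by simp) (by simp),
      ← mul_assoc, ENNReal.mul_inv_cancel (by simp) (by simp), one_mul]⟩
  hg.mul' hf

theorem integrable_mul_mul_apply_s11 [Fintype n] {A B : Ω → Matrix n n ℝ}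
    (hA : ∀ k l, MemLp (fun ω => A ω k l) 2 P) (hB : ∀ k l, MemLp (fun ω => B ω k l) 2 P)
    (C : Matrix n n ℝ) (a b : n) :
    Integrable (fun ω => (A ω * C * B ω) a b) P := by
  simp only [mul_apply, Finset.sum_mul]
  refine integrable_finsetSum _ fun l _ => integrable_finsetSum _ fun k _ => ?_
  simpa only [Pi.mul_apply, mul_right_comm _ (C k l)] using
    ((hA a k).integrable_mul (hB l b)).mul_const (C k l)

theorem matrixIntegral_mul_mul_of_indepFun [Fintype n] {A B : Ω → Matrix n n ℝ}
    (hAB : ∀ a k l b, IndepFun (fun ω => A ω a k) (fun ω => B ω l b) P)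
    (hA : ∀ k l, Integrable (fun ω => A ω k l) P) (hB : ∀ k l, Integrable (fun ω => B ω k l) P)
    (C : Matrix n n ℝ) :
    matrixIntegral P (fun ω => A ω * C * B ω) = matrixIntegral P A * C * matrixIntegral P B := by
  have hterm : ∀ a k l b, Integrable (fun ω => A ω a k * C k l * B ω l b) P := fun a k l b => by
    simpa only [Pi.mul_apply, mul_right_comm _ (C k l)] using
      ((hAB a k l b).integrable_mul (hA a k) (hB l b)).mul_const (C k l)
  ext a b
  simp only [matrixIntegral, of_apply, mul_apply, Finset.sum_mul]
  rw [integral_finsetSum _ fun l _ => integrable_finsetSum _ fun k _ => hterm a k l b]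
  refine Finset.sum_congr rfl fun l _ => ?_
  rw [integral_finsetSum _ fun k _ => hterm a k l b]
  refine Finset.sum_congr rfl fun k _ => ?_
  simp only [mul_right_comm _ (C k l)]
  rw [integral_mul_const]
  exact congrArg (· * C k l) ((hAB a k l b).integral_mul_eq_mul_integral (hA a k).1 (hB l b).1)

theorem matrixIntegral_vecMulVec_mul_mul_vecMulVec_of_indepFun [Fintype n] [IsFiniteMeasure P]
    {X Y : Ω → n → ℝ} (hXY : IndepFun X Y P) (hX : ∀ k, MemLp (fun ω => X ω k) 4 P)
    (hY : ∀ k, MemLp (fun ω => Y ω k) 4 P) (C : Matrix n n ℝ) :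
    matrixIntegral P (fun ω => vecMulVec (X ω) (X ω) * C * vecMulVec (Y ω) (Y ω)) =
      matrixIntegral P (fun ω => vecMulVec (X ω) (X ω)) * C *
        matrixIntegral P (fun ω => vecMulVec (Y ω) (Y ω)) := by
  have hcoord : ∀ a k : n, Measurable fun v : n → ℝ => v a * v k :=
    fun a k => (measurable_pi_apply a).mul (measurable_pi_apply k)
  exact matrixIntegral_mul_mul_of_indepFun
    (fun a k l b => hXY.comp (hcoord a k) (hcoord l b))
    (fun k l => (memLp_two_mul_of_memLp_four (hX k) (hX l)).integrable one_le_two)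
    (fun k l => (memLp_two_mul_of_memLp_four (hY k) (hY l)).integrable one_le_two) C

end Integral

theorem Matrix.posSemidef_smul_sub_average_of_offDiag_eq {ι n : Type*} [Fintype ι] [Nonempty ι]
    [DecidableEq ι] [Fintype n] {M : ι → ι → Matrix n n ℝ} {H : Matrix n n ℝ} {κ : ℝ}
    (hoff : ∀ i j, i ≠ j → M i j = H) (hdiag : ∀ i, (κ • H - M i i).PosSemidef) :
    ((κ / Fintype.card ι + (Fintype.card ι - 1) / Fintype.card ι) • H -
      (1 / Fintype.card ι * (1 / Fintype.card ι) : ℝ) • ∑ i, ∑ j, M i j).PosSemidef := by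
  set N := Fintype.card ι
  have hN : (N : ℝ) ≠ 0 := Nat.cast_ne_zero.2 Fintype.card_ne_zero
  have hcast : ((N * (N - 1) : ℕ) : ℝ) = N * (N - 1) := by
    rw [Nat.cast_mul, Nat.cast_pred Fintype.card_pos]
  have hsum : ∑ i, (κ • H - M i i) = (N * κ) • H - ∑ i, M i i := by
    rw [Finset.sum_sub_distrib, Finset.sum_const, Finset.card_univ, ← Nat.cast_smul_eq_nsmul ℝ,
      smul_smul]
  have hkey : (κ / N + (N - 1) / N) • H - (1 / N * (1 / N) : ℝ) • ∑ i, ∑ j, M i j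
      = (1 / N * (1 / N) : ℝ) • ∑ i, (κ • H - M i i) := by
    rw [Fintype.sum_sum_eq_sum_diag_add_nsmul hoff, hsum, ← Nat.cast_smul_eq_nsmul ℝ, hcast]
    match_scalars
    · field_simp
      ring
    · field_simp
  rw [hkey]
  exact (posSemidef_sum _ fun i _ => hdiag i).smul (by positivity)

theorem minibatch_statistical_condition_number_general
    (d m : ℕ) (hm : 0 < m)
    (Ω : Type) [MeasurableSpace Ω] (P : Measure Ω) [IsProbabilityMeasure P]
    (x : Fin m → Ω → Fin d → ℝ)
    (hindep : iIndepFun x P)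
    (hmom : ∀ i k, MemLp (fun ω => x i ω k) 4 P)
    (H : Matrix (Fin d) (Fin d) ℝ) (hH : H.PosDef)
    (hcov : ∀ i, (Matrix.of fun k l => ∫ ω, x i ω k * x i ω l ∂P) = H)
    (κt : ℝ)
    (hstat : ∀ i,
      (κt • H - Matrix.of fun k l =>
          ∫ ω, (x i ω ⬝ᵥ H⁻¹.mulVec (x i ω)) * (x i ω k * x i ω l) ∂P).PosSemidef) :
    (((κt - 1) / (m : ℝ)) • H -
        ((Matrix.of fun k l =>
            ∫ ω, (((1 / (m : ℝ)) • ∑ i, Matrix.vecMulVec (x i ω) (x i ω)) * H⁻¹ *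
                ((1 / (m : ℝ)) • ∑ i, Matrix.vecMulVec (x i ω) (x i ω))) k l ∂P) - H)).PosSemidef
      ∧
    ((κt / (m : ℝ) + ((m : ℝ) - 1) / (m : ℝ)) • H -
        (Matrix.of fun k l =>
            ∫ ω, (((1 / (m : ℝ)) • ∑ i, Matrix.vecMulVec (x i ω) (x i ω)) * H⁻¹ *
                ((1 / (m : ℝ)) • ∑ i, Matrix.vecMulVec (x i ω) (x i ω))) k l ∂P)).PosSemidef := by
  have : NeZero m := ⟨hm.ne'⟩
  set A : Fin m → Ω → Matrix (Fin d) (Fin d) ℝ := fun i ω => vecMulVec (x i ω) (x i ω)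
  have hA : ∀ i k l, MemLp (fun ω => A i ω k l) 2 P :=
    fun i k l => memLp_two_mul_of_memLp_four (hmom i k) (hmom i l)
  have hAHA : ∀ i j k l, Integrable (fun ω => (A i ω * H⁻¹ * A j ω) k l) P :=
    fun i j => integrable_mul_mul_apply_s11 (hA i) (hA j) H⁻¹
  have hexpand : matrixIntegral P (fun ω => ((1 / (m : ℝ)) • ∑ i, A i ω) * H⁻¹ *
        ((1 / (m : ℝ)) • ∑ i, A i ω)) =
      (1 / (m : ℝ) * (1 / m)) • ∑ i, ∑ j, matrixIntegral P (fun ω => A i ω * H⁻¹ * A j ω) := by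
    simp only [smul_sum_mul_mul_smul_sum]
    rw [matrixIntegral_smul, matrixIntegral_sum _ fun i _ k l => by
      simpa only [Matrix.sum_apply] using integrable_finsetSum _ fun j _ => hAHA i j k l]
    simp only [matrixIntegral_sum _ fun j _ => hAHA _ j]
  have hoff : ∀ i j, i ≠ j → matrixIntegral P (fun ω => A i ω * H⁻¹ * A j ω) = H := by
    intro i j hij
    rw [matrixIntegral_vecMulVec_mul_mul_vecMulVec_of_indepFun (hindep.indepFun hij) (hmom i)
      (hmom j), show matrixIntegral P (A i) = H from hcov i,
      show matrixIntegral P (A j) = H from hcov j,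
      mul_nonsing_inv _ ((isUnit_iff_isUnit_det H).1 hH.isUnit), Matrix.one_mul]
  have hdiag : ∀ i, (κt • H - matrixIntegral P (fun ω => A i ω * H⁻¹ * A i ω)).PosSemidef := by
    intro i
    simp only [A, vecMulVec_self_mul_mul_vecMulVec_self]
    exact hstat i
  have hmain := posSemidef_smul_sub_average_of_offDiag_eq hoff hdiag
  simp only [Fintype.card_fin, ← hexpand] at hmain
  have hcoef : (κt - 1) / m + 1 = κt / m + ((m : ℝ) - 1) / m := by field_simp; ring
  refine ⟨?_, hmain⟩
  convert hmain using 1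
  rw [← hcoef, add_smul, one_smul]
  exact sub_sub_eq_add_sub _ _ _

/-- Mini-batch statistical condition number bound (Lemma 4): if `x̃₁, …, x̃_m` are i.i.d.
random vectors with `E[x̃x̃ᵀ] = H` and `E[(x̃ᵀH⁻¹x̃) x̃x̃ᵀ] ⪯ κ̃H`, then the mini-batch matrix
`H̃_m = (1/m)Σᵢ x̃ᵢx̃ᵢᵀ` satisfies `E[H̃_m H⁻¹ H̃_m] − H ⪯ ((κ̃ − 1)/m) H`, equivalently
`E[H̃_m H⁻¹ H̃_m] ⪯ (κ̃/m + (m−1)/m) H`. -/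
theorem minibatch_statistical_condition_number
    (d m : ℕ) (hm : 0 < m)
    (Ω : Type) [MeasurableSpace Ω] (P : Measure Ω) [IsProbabilityMeasure P]
    (x : Fin m → Ω → Fin d → ℝ)
    (hmeas : ∀ i, Measurable (x i))
    (hindep : iIndepFun x P)
    (hident : ∀ i j, Measure.map (x i) P = Measure.map (x j) P)
    (hmom : ∀ i k, MemLp (fun ω => x i ω k) 4 P)
    (H : Matrix (Fin d) (Fin d) ℝ) (hH : H.PosDef)
    (hcov : ∀ i, (Matrix.of fun k l => ∫ ω, x i ω k * x i ω l ∂P) = H)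
    (κt : ℝ) (hκt : 0 < κt)
    (hstat : ∀ i,
      (κt • H - Matrix.of fun k l =>
          ∫ ω, (x i ω ⬝ᵥ H⁻¹.mulVec (x i ω)) * (x i ω k * x i ω l) ∂P).PosSemidef) :
    (((κt - 1) / (m : ℝ)) • H -
        ((Matrix.of fun k l =>
            ∫ ω, (((1 / (m : ℝ)) • ∑ i, Matrix.vecMulVec (x i ω) (x i ω)) * H⁻¹ *
                ((1 / (m : ℝ)) • ∑ i, Matrix.vecMulVec (x i ω) (x i ω))) k l ∂P) - H)).PosSemidef
      ∧
    ((κt / (m : ℝ) + ((m : ℝ) - 1) / (m : ℝ)) • H -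
        (Matrix.of fun k l =>
            ∫ ω, (((1 / (m : ℝ)) • ∑ i, Matrix.vecMulVec (x i ω) (x i ω)) * H⁻¹ *
                ((1 / (m : ℝ)) • ∑ i, Matrix.vecMulVec (x i ω) (x i ω))) k l ∂P)).PosSemidef :=
  minibatch_statistical_condition_number_general d m hm Ω P x hindep hmom H hH hcov κt hstat
end

section
/- Let d ∈ ℕ, let G : ℕ × ℝ^d → ℝ^d be an arbitrary map (interpreted as the stochastic gradient realization at step t evaluated at the given point), and let η, α, δ > 0. Set γ = (1−α)/(1+α), η₁ = η, η₂ = (η − αδ)/(1+α). Define sequences by rule A: w^A_{t+1} = u^A_t − η₁ G(t, u^A_t), u^A_{t+1} = (1+γ) w^A_{t+1} − γ w^A_t + η₂ G(t, u^A_t), with u^A₀ = w^A₀ = w₀; and by rule B: w^B_{t+1} = u^B_t − η G(t, u^B_t), v_{t+1} = (1−α) v_t + α u^B_t − δ G(t, u^B_t), u^B_{t+1} = (α v_{t+1} + w^B_{t+1})/(1+α), with v₀ = u^B₀ = w^B₀ = w₀. Then for all t ≥ 0, w^A_t = w^B_t and u^A_t = u^B_t. (Thus the two forms of the MaSS update rules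 are equivalent under this bijection of hyper-parameters.) -/
/-!
Rule A is a recursion in `(w, u)` alone, so it suffices to show that the iterates of rule B
satisfy it. Rule B defines `u_{t+1}` as the weighted mean `(α v_{t+1} + w_{t+1}) / (1 + α)`, so
the auxiliary variable is recovered as `α v_t = (1 + α) u_t - w_t` (also at `t = 0`, where all
three variables agree). Substituting this into the update of `v` eliminates it and turns the
update of `u` into the momentum-plus-compensation form.
-/

section

variable {K E : Type*} [Field K] [AddCommGroup E] [Module K E]

theorem smul_eq_sub_of_eq_one_div_smul {α : K} (hα : 1 + α ≠ 0) {u v w : E}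
    (hu : u = (1 / (1 + α)) • (α • v + w)) : α • v = (1 + α) • u - w := by
  rw [hu, smul_smul, mul_one_div_cancel hα, one_smul, add_sub_cancel_right]

theorem mass_three_variable_u_succ {α η δ : K} (hα : 1 + α ≠ 0) {g w₀ w₁ v₀ v₁ u₀ u₁ : E}
    (hv : α • v₀ = (1 + α) • u₀ - w₀)
    (hw₁ : w₁ = u₀ - η • g) (hv₁ : v₁ = (1 - α) • v₀ + α • u₀ - δ • g)
    (hu₁ : u₁ = (1 / (1 + α)) • (α • v₁ + w₁)) :
    u₁ = (1 + (1 - α) / (1 + α)) • w₁ - ((1 - α) / (1 + α)) • w₀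
      + ((η - α * δ) / (1 + α)) • g := by
  have h : 1 + (1 - α) / (1 + α) = 2 / (1 + α) := by field_simp; ring
  rw [h, hu₁, hv₁, hw₁]
  linear_combination (norm := module) ((1 - α) / (1 + α)) • hv

end

theorem mass_momentum_form_unique {K E : Type*} [Ring K] [AddCommGroup E] [Module K E]
    (G : ℕ → E → E) {η₁ η₂ γ : K} {w u w' u' : ℕ → E}
    (hw0 : w 0 = w' 0) (hu0 : u 0 = u' 0)
    (hw : ∀ t, w (t + 1) = u t - η₁ • G t (u t))
    (hu : ∀ t, u (t + 1) = (1 + γ) • w (t + 1) - γ • w t + η₂ • G t (u t))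
    (hw' : ∀ t, w' (t + 1) = u' t - η₁ • G t (u' t))
    (hu' : ∀ t, u' (t + 1) = (1 + γ) • w' (t + 1) - γ • w' t + η₂ • G t (u' t)) :
    ∀ t, w t = w' t ∧ u t = u' t
  | 0 => ⟨hw0, hu0⟩
  | t + 1 => by
    obtain ⟨hwt, hut⟩ := mass_momentum_form_unique G hw0 hu0 hw hu hw' hu' t
    have hwt₁ : w (t + 1) = w' (t + 1) := by rw [hw, hw', hut]
    exact ⟨hwt₁, by rw [hu, hu', hwt₁, hwt, hut]⟩

theorem mass_update_rules_equivalent_general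
    (d : ℕ) (G : ℕ → (Fin d → ℝ) → (Fin d → ℝ)) (η α δ : ℝ)
    (hα : 0 < α)
    (γ η₁ η₂ : ℝ)
    (hγ : γ = (1 - α) / (1 + α)) (hη₁ : η₁ = η) (hη₂ : η₂ = (η - α * δ) / (1 + α))
    (w₀ : Fin d → ℝ)
    (wA uA wB vB uB : ℕ → Fin d → ℝ)
    (hwA0 : wA 0 = w₀) (huA0 : uA 0 = w₀)
    (hwA : ∀ t, wA (t + 1) = uA t - η₁ • G t (uA t))
    (huA : ∀ t, uA (t + 1) = (1 + γ) • wA (t + 1) - γ • wA t + η₂ • G t (uA t))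
    (hwB0 : wB 0 = w₀) (hvB0 : vB 0 = w₀) (huB0 : uB 0 = w₀)
    (hwB : ∀ t, wB (t + 1) = uB t - η • G t (uB t))
    (hvB : ∀ t, vB (t + 1) = (1 - α) • vB t + α • uB t - δ • G t (uB t))
    (huB : ∀ t, uB (t + 1) = (1 / (1 + α)) • (α • vB (t + 1) + wB (t + 1))) :
    ∀ t, wA t = wB t ∧ uA t = uB t := by
  have hα₁ : 1 + α ≠ 0 := by positivity
  have hvB_eq : ∀ t, α • vB t = (1 + α) • uB t - wB t
    | 0 => by rw [hvB0, huB0, hwB0]; module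
    | t + 1 => smul_eq_sub_of_eq_one_div_smul hα₁ (huB t)
  have huB' : ∀ t, uB (t + 1) = (1 + γ) • wB (t + 1) - γ • wB t + η₂ • G t (uB t) := by
    intro t
    rw [hγ, hη₂]
    exact mass_three_variable_u_succ hα₁ (hvB_eq t) (hwB t) (hvB t) (huB t)
  subst hη₁
  exact mass_momentum_form_unique G (hwA0.trans hwB0.symm) (huA0.trans huB0.symm)
    hwA huA hwB huB'

/-- Equivalence of the two forms of the MaSS update rules. Rule A is the
momentum-plus-compensation form (step size `η₁`, compensation parameter `η₂`, momentum `γ`);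
rule B is the three-variable form (step size `η`, acceleration parameter `α`, secondary step
size `δ`). Under the hyper-parameter bijection `γ = (1−α)/(1+α)`, `η₁ = η`,
`η₂ = (η − αδ)/(1+α)`, the two rules generate identical iterates. -/
theorem mass_update_rules_equivalent
    (d : ℕ) (G : ℕ → (Fin d → ℝ) → (Fin d → ℝ)) (η α δ : ℝ)
    (hη : 0 < η) (hα : 0 < α) (hδ : 0 < δ)
    (γ η₁ η₂ : ℝ)
    (hγ : γ = (1 - α) / (1 + α)) (hη₁ : η₁ = η) (hη₂ : η₂ = (η - α * δ) / (1 + α))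
    (w₀ : Fin d → ℝ)
    (wA uA wB vB uB : ℕ → Fin d → ℝ)
    (hwA0 : wA 0 = w₀) (huA0 : uA 0 = w₀)
    (hwA : ∀ t, wA (t + 1) = uA t - η₁ • G t (uA t))
    (huA : ∀ t, uA (t + 1) = (1 + γ) • wA (t + 1) - γ • wA t + η₂ • G t (uA t))
    (hwB0 : wB 0 = w₀) (hvB0 : vB 0 = w₀) (huB0 : uB 0 = w₀)
    (hwB : ∀ t, wB (t + 1) = uB t - η • G t (uB t))
    (hvB : ∀ t, vB (t + 1) = (1 - α) • vB t + α • uB t - δ • G t (uB t))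
    (huB : ∀ t, uB (t + 1) = (1 / (1 + α)) • (α • vB (t + 1) + wB (t + 1))) :
    ∀ t, wA t = wB t ∧ uA t = uB t :=
  mass_update_rules_equivalent_general d G η α δ hα γ η₁ η₂ hγ hη₁ hη₂ w₀ wA uA wB vB uB hwA0 huA0
    hwA huA hwB0 hvB0 huB0 hwB hvB huB
end

section
/- Let x be a centered Gaussian random vector in ℝ^d with symmetric positive definite covariance matrix H, fix w* ∈ ℝ^d, and define the per-sample square loss f_x(w) = (1/2)⟨w − w*, x⟩² (with gradient ∇f_x(w) = ⟨w − w*, x⟩ x) and the population loss f(w) = E[f_x(w)] (with gradient ∇f(w) = H(w − w*)). Suppose ρ ∈ ℝ satisfies the strong growth condition E[‖∇f_x(w)‖²] ≤ ρ ‖∇f(w)‖² for all w ∈ ℝ^d. Then ρ ≥ 2 + tr(H)/λ_min(H); in particular ρ > κ, where κ = λ_max(H)/λ_min(H) is the condition number of H. -/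
/-!
Write `x = A z` with `z` a standard Gaussian vector and `A Aᵀ = H`. Every linear form `a ⬝ z`
is `N(0, ‖a‖²)`, so `E[(a ⬝ z)⁴] = 3 ‖a‖⁴`, and polarizing this fourth moment gives the Isserlis
identity `E[(c ⬝ z)² (b ⬝ z)²] = ‖c‖² ‖b‖² + 2 (c ⬝ b)²`. Applied with `c = Aᵀ v` and `b` the rows
of `A`, it yields `E‖∇f_x(w)‖² = (vᵀ H v) tr H + 2 ‖H v‖²` for `v = w − w*`. For an eigenvector `v`
of `λ_min` the strong growth condition thus reads `λ_min tr H + 2 λ_min² ≤ ρ λ_min²`, and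
`λ_max ≤ tr H` because `vᵀ H v = ‖Aᵀ v‖² ≤ ‖A‖_F² ‖v‖²` by Cauchy–Schwarz.
-/

open MeasureTheory ProbabilityTheory Matrix

/-- `z` is a standard Gaussian vector: its coordinates are i.i.d. `N(0,1)`. -/
def IsStdGaussianVector {Ω : Type} [MeasurableSpace Ω] (P : Measure Ω) {d : ℕ}
    (z : Ω → Fin d → ℝ) : Prop :=
  Measurable z ∧
  iIndepFun (fun i ω => z ω i) P ∧
  ∀ i, Measure.map (fun ω => z ω i) P = gaussianReal 0 1

/-- `x` is a centered Gaussian vector with covariance `H`: `x = A z` for some matrix `A`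
with `AAᵀ = H` and `z` a standard Gaussian vector. -/
def IsCenteredGaussianWithCov {Ω : Type} [MeasurableSpace Ω] (P : Measure Ω) {d : ℕ}
    (x : Ω → Fin d → ℝ) (H : Matrix (Fin d) (Fin d) ℝ) : Prop :=
  ∃ (A : Matrix (Fin d) (Fin d) ℝ) (z : Ω → Fin d → ℝ),
    IsStdGaussianVector P z ∧ A * Aᵀ = H ∧ ∀ ω, x ω = A.mulVec (z ω)

open Polynomial in
theorem hasDerivAt_eval_mul_exp_mul_sq_div_two (v : ℝ) (p : ℝ[X]) (t : ℝ) :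
    HasDerivAt (fun t => p.eval t * Real.exp (v * t ^ 2 / 2))
      ((derivative p + C v * X * p).eval t * Real.exp (v * t ^ 2 / 2)) t := by
  have hexp : HasDerivAt (fun t => Real.exp (v * t ^ 2 / 2))
      (Real.exp (v * t ^ 2 / 2) * (v * t)) t := by
    convert (((hasDerivAt_pow 2 t).const_mul v).div_const 2).exp using 1
    ring
  refine ((p.hasDerivAt t).fun_mul hexp).congr_deriv ?_
  simp only [eval_add, eval_mul, eval_C, eval_X]
  ring

open Polynomial in
theorem integral_pow_four_gaussianReal (v : NNReal) :
    ∫ x, x ^ 4 ∂gaussianReal 0 v = 3 * (v : ℝ) ^ 2 := by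
  have hmgf : (fun t => Real.exp (0 * t + v * t ^ 2 / 2)) =
      fun t => (1 : ℝ[X]).eval t * Real.exp (v * t ^ 2 / 2) := by
    simp
  have hderiv (p : ℝ[X]) : deriv (fun t => p.eval t * Real.exp (v * t ^ 2 / 2)) =
      fun t => (derivative p + C (v : ℝ) * X * p).eval t * Real.exp (v * t ^ 2 / 2) :=
    funext fun t => (hasDerivAt_eval_mul_exp_mul_sq_div_two v p t).deriv
  have hmoment := iteratedDeriv_mgf_zero (X := fun x => x) (μ := gaussianReal 0 v) (by simp) 4
  simp only [Pi.pow_apply] at hmoment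
  rw [← hmoment, mgf_fun_id_gaussianReal]
  simp only [iteratedDeriv_eq_iterate, Function.iterate_succ, Function.comp_apply,
    Function.iterate_zero, id, hmgf, hderiv]
  simp
  ring

namespace Matrix

variable {m n : Type*} [Fintype m] [Fintype n]

theorem dotProduct_sq_le_dotProduct_self_mul (a b : n → ℝ) :
    (a ⬝ᵥ b) ^ 2 ≤ (a ⬝ᵥ a) * (b ⬝ᵥ b) := by
  simpa only [dotProduct, sq] using Finset.sum_mul_sq_le_sq_mul_sq Finset.univ a b

theorem sum_sq_eq_dotProduct_self (a : n → ℝ) : ∑ i, a i ^ 2 = a ⬝ᵥ a := by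
  simp only [dotProduct, sq]

theorem dotProduct_self_pos {a : n → ℝ} (ha : a ≠ 0) : 0 < a ⬝ᵥ a := by
  simpa using dotProduct_self_star_pos_iff.mpr ha

theorem sum_sq_dotProduct_row (B : Matrix m n ℝ) (c : n → ℝ) :
    ∑ i, (B i ⬝ᵥ c) ^ 2 = B *ᵥ c ⬝ᵥ B *ᵥ c :=
  sum_sq_eq_dotProduct_self (B *ᵥ c)

theorem trace_mul_transpose_eq_sum_dotProduct_row (B : Matrix m n ℝ) :
    (B * Bᵀ).trace = ∑ i, B i ⬝ᵥ B i :=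
  rfl

theorem mulVec_vecMul_self (B : Matrix m n ℝ) (v : m → ℝ) : B *ᵥ (v ᵥ* B) = (B * Bᵀ) *ᵥ v := by
  rw [← mulVec_transpose, mulVec_mulVec]

theorem dotProduct_mul_transpose_mulVec (B : Matrix m n ℝ) (v : m → ℝ) :
    v ⬝ᵥ (B * Bᵀ) *ᵥ v = v ᵥ* B ⬝ᵥ v ᵥ* B := by
  rw [← mulVec_vecMul_self, dotProduct_mulVec]

theorem dotProduct_mul_transpose_mulVec_le (B : Matrix m n ℝ) (v : m → ℝ) :
    v ⬝ᵥ (B * Bᵀ) *ᵥ v ≤ (B * Bᵀ).trace * (v ⬝ᵥ v) := by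
  calc v ⬝ᵥ (B * Bᵀ) *ᵥ v = ∑ j, (Bᵀ j ⬝ᵥ v) ^ 2 := by
        rw [dotProduct_mul_transpose_mulVec, sum_sq_dotProduct_row, mulVec_transpose]
    _ ≤ ∑ j, (Bᵀ j ⬝ᵥ Bᵀ j) * (v ⬝ᵥ v) :=
        Finset.sum_le_sum fun j _ => dotProduct_sq_le_dotProduct_self_mul _ _
    _ = (B * Bᵀ).trace * (v ⬝ᵥ v) := by
        rw [← Finset.sum_mul, ← trace_mul_transpose_eq_sum_dotProduct_row, transpose_transpose,
          trace_mul_comm]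

theorem le_trace_of_mul_transpose_mulVec_eq_smul {B : Matrix n m ℝ} {v : n → ℝ} {μ : ℝ}
    (hv : v ≠ 0) (h : (B * Bᵀ) *ᵥ v = μ • v) : μ ≤ (B * Bᵀ).trace := by
  refine le_of_mul_le_mul_right ?_ (dotProduct_self_pos hv)
  calc μ * (v ⬝ᵥ v) = v ⬝ᵥ (B * Bᵀ) *ᵥ v := by rw [h, dotProduct_smul, smul_eq_mul]
    _ ≤ _ := dotProduct_mul_transpose_mulVec_le B v

theorem PosDef.pos_of_mulVec_eq_smul {H : Matrix n n ℝ} (hH : H.PosDef) {v : n → ℝ} {μ : ℝ}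
    (hv : v ≠ 0) (h : H *ᵥ v = μ • v) : 0 < μ := by
  have := hH.dotProduct_mulVec_pos hv
  rw [h, dotProduct_smul, smul_eq_mul, star_trivial] at this
  exact pos_of_mul_pos_left this (dotProduct_self_pos hv).le

theorem sq_dotProduct_mul_sq_dotProduct (c b y : n → ℝ) :
    (c ⬝ᵥ y) ^ 2 * (b ⬝ᵥ y) ^ 2 =
      (((c + b) ⬝ᵥ y) ^ 4 + ((c - b) ⬝ᵥ y) ^ 4 - 2 * (c ⬝ᵥ y) ^ 4 - 2 * (b ⬝ᵥ y) ^ 4) / 12 := by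
  rw [add_dotProduct, sub_dotProduct]
  ring

end Matrix

namespace IsStdGaussianVector

variable {Ω : Type} [MeasurableSpace Ω] {P : Measure Ω} {d : ℕ} {z : Ω → Fin d → ℝ}

lemma hasLaw_apply (hz : IsStdGaussianVector P z) (i : Fin d) :
    HasLaw (fun ω => z ω i) (gaussianReal 0 1) P :=
  ⟨(measurable_pi_apply i).comp_aemeasurable hz.1.aemeasurable, hz.2.2 i⟩

lemma hasGaussianLaw_dotProduct (hz : IsStdGaussianVector P z) (a : Fin d → ℝ) :
    HasGaussianLaw (fun ω => a ⬝ᵥ z ω) P :=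
  (hz.2.1.hasGaussianLaw fun i => (hz.hasLaw_apply i).hasGaussianLaw).map_fun
    (dotProductBilin ℝ ℝ a).toContinuousLinearMap

lemma integrable_dotProduct_pow_four (hz : IsStdGaussianVector P z) (a : Fin d → ℝ) :
    Integrable (fun ω => (a ⬝ᵥ z ω) ^ 4) P := by
  have h4 := (hz.hasGaussianLaw_dotProduct a).memLp (p := 4) (by norm_num)
  simpa [Even.pow_abs (by decide : Even 4)] using h4.integrable_norm_pow (by norm_num)

lemma integrable_sq_dotProduct_mul_sq_dotProduct (hz : IsStdGaussianVector P z)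
    (c b : Fin d → ℝ) :
    Integrable (fun ω => (c ⬝ᵥ z ω) ^ 2 * (b ⬝ᵥ z ω) ^ 2) P := by
  simp_rw [sq_dotProduct_mul_sq_dotProduct]
  have h := hz.integrable_dotProduct_pow_four
  exact ((((h _).add (h _)).sub ((h c).const_mul 2)).sub ((h b).const_mul 2)).div_const 12

variable [IsProbabilityMeasure P]

lemma map_dotProduct (hz : IsStdGaussianVector P z) (a : Fin d → ℝ) :
    P.map (fun ω => a ⬝ᵥ z ω) = gaussianReal 0 (a ⬝ᵥ a).toNNReal := by
  have hlaw := hz.hasLaw_apply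
  have hmemLp : ∀ i, MemLp (fun ω => a i * z ω i) 2 P := fun i =>
    (hlaw i).hasGaussianLaw.memLp_two.const_mul (a i)
  have hsum : (fun ω => a ⬝ᵥ z ω) = ∑ i, fun ω => a i * z ω i := by
    ext ω
    simp [dotProduct]
  rw [(hz.hasGaussianLaw_dotProduct a).map_eq_gaussianReal]
  congr
  · simp only [dotProduct]
    rw [integral_finsetSum _ fun i _ => (hmemLp i).integrable one_le_two]
    simp [integral_const_mul, (hlaw _).integral_eq]
  · rw [hsum, IndepFun.variance_sum (fun i _ => hmemLp i)]
    · simp [variance_const_mul, (hlaw _).variance_eq, dotProduct, sq]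
    · exact fun i _ j _ hij =>
        (hz.2.1.indepFun hij).comp (measurable_const_mul (a i)) (measurable_const_mul (a j))

lemma integral_dotProduct_pow_four (hz : IsStdGaussianVector P z) (a : Fin d → ℝ) :
    ∫ ω, (a ⬝ᵥ z ω) ^ 4 ∂P = 3 * (a ⬝ᵥ a) ^ 2 := by
  rw [← integral_map (f := fun x : ℝ => x ^ 4) (hz.hasGaussianLaw_dotProduct a).aemeasurable
    (by fun_prop), hz.map_dotProduct, integral_pow_four_gaussianReal,
    Real.coe_toNNReal _ (by simpa using dotProduct_self_star_nonneg a)]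

lemma integral_sq_dotProduct_mul_sq_dotProduct (hz : IsStdGaussianVector P z)
    (c b : Fin d → ℝ) :
    ∫ ω, (c ⬝ᵥ z ω) ^ 2 * (b ⬝ᵥ z ω) ^ 2 ∂P = (c ⬝ᵥ c) * (b ⬝ᵥ b) + 2 * (c ⬝ᵥ b) ^ 2 := by
  have h := hz.integrable_dotProduct_pow_four
  simp_rw [sq_dotProduct_mul_sq_dotProduct]
  have := h (c + b); have := h (c - b); have := h c; have := h b
  rw [integral_div, integral_sub (by fun_prop) (by fun_prop),
    integral_sub (by fun_prop) (by fun_prop), integral_add (by fun_prop) (by fun_prop),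
    integral_const_mul, integral_const_mul]
  simp only [integral_dotProduct_pow_four hz]
  simp only [add_dotProduct, dotProduct_add, sub_dotProduct, dotProduct_sub, dotProduct_comm b c]
  ring

end IsStdGaussianVector

theorem IsCenteredGaussianWithCov.integral_sum_sq_dotProduct_mul_apply {Ω : Type}
    [MeasurableSpace Ω] {P : Measure Ω} [IsProbabilityMeasure P] {d : ℕ}
    {x : Ω → Fin d → ℝ} {H : Matrix (Fin d) (Fin d) ℝ} (hx : IsCenteredGaussianWithCov P x H)
    (v : Fin d → ℝ) :
    ∫ ω, ∑ i, ((v ⬝ᵥ x ω) * x ω i) ^ 2 ∂P =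
      (v ⬝ᵥ H *ᵥ v) * H.trace + 2 * (H *ᵥ v ⬝ᵥ H *ᵥ v) := by
  obtain ⟨A, z, hz, rfl, hxA⟩ := hx
  have hintegrand :
      ∀ ω i, ((v ⬝ᵥ x ω) * x ω i) ^ 2 = (v ᵥ* A ⬝ᵥ z ω) ^ 2 * (A i ⬝ᵥ z ω) ^ 2 := by
    intro ω i
    rw [hxA, dotProduct_mulVec, mul_pow]
    rfl
  simp_rw [hintegrand]
  rw [integral_finsetSum (f := fun i ω => (v ᵥ* A ⬝ᵥ z ω) ^ 2 * (A i ⬝ᵥ z ω) ^ 2) _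
    fun i _ => hz.integrable_sq_dotProduct_mul_sq_dotProduct _ _]
  simp_rw [hz.integral_sq_dotProduct_mul_sq_dotProduct]
  rw [Finset.sum_add_distrib, ← Finset.mul_sum, ← Finset.mul_sum,
    ← trace_mul_transpose_eq_sum_dotProduct_row]
  simp_rw [dotProduct_comm (v ᵥ* A)]
  rw [sum_sq_dotProduct_row, mulVec_vecMul_self, dotProduct_mul_transpose_mulVec, mul_comm]

/-- For Gaussian data the strong growth condition parameter exceeds the condition number:
if `E[‖∇f_x(w)‖²] ≤ ρ‖∇f(w)‖²` for all `w`, where `∇f_x(w) = ⟨w − w*, x⟩x` and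
`∇f(w) = H(w − w*)`, then `ρ ≥ 2 + tr(H)/λ_min(H)`, and in particular
`ρ > κ = λ_max(H)/λ_min(H)`. -/
theorem gaussian_strong_growth_exceeds_condition_number
    (d : ℕ) (Ω : Type) [MeasurableSpace Ω] (P : Measure Ω) [IsProbabilityMeasure P]
    (H : Matrix (Fin d) (Fin d) ℝ) (hH : H.PosDef)
    (x : Ω → Fin d → ℝ)
    (hx : IsCenteredGaussianWithCov P x H)
    (wstar : Fin d → ℝ)
    (lamMin lamMax : ℝ)
    (hmin : IsLeast {c : ℝ | ∃ v : Fin d → ℝ, v ≠ 0 ∧ H.mulVec v = c • v} lamMin)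
    (hmax : IsGreatest {c : ℝ | ∃ v : Fin d → ℝ, v ≠ 0 ∧ H.mulVec v = c • v} lamMax)
    (ρ : ℝ)
    (hsgc : ∀ w : Fin d → ℝ,
      (∫ ω, ∑ i, (((w - wstar) ⬝ᵥ x ω) * x ω i) ^ 2 ∂P)
        ≤ ρ * ∑ i, (H.mulVec (w - wstar) i) ^ 2) :
    2 + H.trace / lamMin ≤ ρ ∧ lamMax / lamMin < ρ := by
  obtain ⟨⟨v, hv, hHv⟩, -⟩ := hmin
  obtain ⟨⟨u, hu, hHu⟩, -⟩ := hmax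
  have hlamMin : 0 < lamMin := hH.pos_of_mulVec_eq_smul hv hHv
  have hvv : 0 < v ⬝ᵥ v := dotProduct_self_pos hv
  have hgrowth := hsgc (wstar + v)
  rw [add_sub_cancel_left, hx.integral_sum_sq_dotProduct_mul_apply, sum_sq_eq_dotProduct_self,
    hHv] at hgrowth
  simp only [dotProduct_smul, smul_dotProduct, smul_eq_mul] at hgrowth
  have hlower : 2 + H.trace / lamMin ≤ ρ := by
    refine le_of_mul_le_mul_right ?_ (by positivity : 0 < lamMin ^ 2 * (v ⬝ᵥ v))
    calc (2 + H.trace / lamMin) * (lamMin ^ 2 * (v ⬝ᵥ v))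
        = lamMin * (v ⬝ᵥ v) * H.trace + 2 * (lamMin * (lamMin * (v ⬝ᵥ v))) := by
          field_simp
          ring
      _ ≤ ρ * (lamMin * (lamMin * (v ⬝ᵥ v))) := hgrowth
      _ = ρ * (lamMin ^ 2 * (v ⬝ᵥ v)) := by ring
  obtain ⟨A, -, -, rfl, -⟩ := hx
  have hlamMax : lamMax ≤ (A * Aᵀ).trace := le_trace_of_mul_transpose_mulVec_eq_smul hu hHu
  exact ⟨hlower, (div_le_div_of_nonneg_right hlamMax hlamMin.le).trans_lt
    ((lt_add_of_pos_left _ two_pos).trans_le hlower)⟩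
end
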